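/- arXiv:0907.1458 — 5 statements merged into one kernel-verified Lean document; each statement's English description precedes it below -/
import Mathlib

section
/- Define F(τ) = max over (m₁,m₂) ∈ {0,1/2}^{2g} of |θ_{(m₁,m₂)}(τ,0)|, the maximum of the absolute values of the 2^{2g} theta Nullwerte with half-integer characteristics. Then for every τ ∈ 𝔖_g one has F(τ) ≥ F(2τ). -/
/-- The theta function with characteristics `m₁, m₂ ∈ ℝ^g`:
`θ_{(m₁,m₂)}(τ,z) = ∑_{n∈ℤ^g} exp(iπ (n+m₁)ᵀτ(n+m₁) + 2iπ (n+m₁)ᵀ(z+m₂))`. -/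
noncomputable def thetaChar {g : ℕ} (m₁ m₂ : Fin g → ℝ)
    (τ : Matrix (Fin g) (Fin g) ℂ) (z : Fin g → ℂ) : ℂ :=
  ∑' n : Fin g → ℤ,
    Complex.exp (Real.pi * Complex.I *
        (∑ i, ∑ j, ((n i : ℂ) + (m₁ i : ℂ)) * τ i j * ((n j : ℂ) + (m₁ j : ℂ)))
      + 2 * Real.pi * Complex.I * (∑ i, ((n i : ℂ) + (m₁ i : ℂ)) * (z i + (m₂ i : ℂ))))

/-- Encoding of a half-integer characteristic: a vector in `{0,1/2}^g`. -/
noncomputable def halfChar {g : ℕ} (b : Fin g → Bool) : Fin g → ℝ :=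
  fun i => if b i then (1/2 : ℝ) else 0

/-!
Multiplying out the series gives the duplication formula
`θ[a,b](2τ)² = 2⁻ᵍ ∑_{c ∈ {0,1/2}ᵍ} e^{-4πi a·c} θ[2a, b+c](τ) θ[0,-c](τ)`:
by the parallelogram law `2Q(n+a) + 2Q(m+a) = Q(n+m+2a) + Q(n-m)` for `Q(x) = xᵀτx`, the product
of two terms at `2τ` is a product of terms at `τ` indexed by `(p, q) = (n+m, n-m)`, and these are
exactly the pairs with `p ≡ q (mod 2)`; that congruence is detected by averaging the characters
`c ↦ e^{2πi (p-q)·c}` of `(ℤ/2)ᵍ`. Positive definiteness of `Im τ` bounds every series by a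
product of one-dimensional Gaussian sums, so all rearrangements are justified. When `a, b` are
half-integral, `θ[2a, b+c]` and `θ[0,-c]` differ from Nullwerte `θ[0, c']` with `c' ∈ {0,1/2}ᵍ`
only by integer shifts of the characteristics, which do not change them; so `|θ[a,b](2τ)|²` is an
average of `2ᵍ` products of two numbers at most `F(τ)`.
-/

open Complex Matrix Finset
open scoped Real

theorem Matrix.PosDef.exists_pos_mul_dotProduct_self_le {n : Type*} [Fintype n]
    {A : Matrix n n ℝ} (hA : A.PosDef) :
    ∃ ε > 0, ∀ x : n → ℝ, ε * (x ⬝ᵥ x) ≤ x ⬝ᵥ A *ᵥ x := by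
  set Q : EuclideanSpace ℝ n → ℝ := fun u => u.ofLp ⬝ᵥ A *ᵥ u.ofLp
  have hQ_cont : Continuous Q := by fun_prop
  have hQ_smul (c : ℝ) (u : EuclideanSpace ℝ n) : Q (c • u) = c ^ 2 * Q u := by
    simp only [Q, WithLp.ofLp_smul, mulVec_smul, smul_dotProduct, dotProduct_smul, smul_eq_mul]
    ring
  obtain ⟨ε, hε, hε_le⟩ :
      ∃ ε > 0, ∀ u ∈ Metric.sphere (0 : EuclideanSpace ℝ n) 1, ε ≤ Q u := by
    rcases (Metric.sphere (0 : EuclideanSpace ℝ n) 1).eq_empty_or_nonempty with h | h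
    · exact ⟨1, one_pos, by simp [h]⟩
    · obtain ⟨u, hu, hmin⟩ := (isCompact_sphere _ _).exists_isMinOn h hQ_cont.continuousOn
      refine ⟨Q u, hA.dotProduct_mulVec_pos fun h0 => ?_, hmin⟩
      simp [show u = 0 from congrArg (WithLp.toLp 2) h0] at hu
  refine ⟨ε, hε, fun x => ?_⟩
  set v := WithLp.toLp 2 x
  have hv : x ⬝ᵥ x = ‖v‖ ^ 2 := by
    rw [EuclideanSpace.real_norm_sq_eq]; simp [v, dotProduct, sq]
  rcases eq_or_ne x 0 with rfl | hx
  · simp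
  have h0 : v ≠ 0 := by simpa [v] using hx
  have hu : ‖v‖⁻¹ • v ∈ Metric.sphere (0 : EuclideanSpace ℝ n) 1 := by
    simp [norm_smul, h0]
  calc ε * (x ⬝ᵥ x) ≤ ‖v‖ ^ 2 * Q (‖v‖⁻¹ • v) := by
        rw [hv, mul_comm]; gcongr; exact hε_le _ hu
    _ = x ⬝ᵥ A *ᵥ x := by
        rw [hQ_smul, ← mul_assoc, ← mul_pow, mul_inv_cancel₀ (norm_ne_zero_iff.mpr h0),
          one_pow, one_mul]

theorem summable_fin_prod_of_nonneg {β : Type*} :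
    ∀ {k : ℕ} (f : Fin k → β → ℝ), (∀ i b, 0 ≤ f i b) → (∀ i, Summable (f i)) →
      Summable fun x : Fin k → β => ∏ i, f i (x i)
  | 0, _, _, _ => by
    have : Finite (Fin 0 → β) := Finite.of_subsingleton
    exact .of_finite
  | k + 1, f, hf, hsum => by
    have h := (hsum 0).mul_of_nonneg
      (summable_fin_prod_of_nonneg (fun i => f i.succ) (fun i => hf i.succ)
        (fun i => hsum i.succ))
      (hf 0) (fun _ => prod_nonneg fun i _ => hf i.succ _)
    rw [← (Fin.consEquiv fun _ => β).summable_iff]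
    exact h.congr fun x => by simp [Fin.prod_univ_succ]

def sameParity (ι : Type*) : Set ((ι → ℤ) × (ι → ℤ)) :=
  {pq | ∀ i, Even (pq.1 i - pq.2 i)}

theorem tsum_comp_add_sub {ι M : Type*} [AddCommMonoid M] [TopologicalSpace M]
    (F : (ι → ℤ) × (ι → ℤ) → M) :
    ∑' nm : (ι → ℤ) × (ι → ℤ), F (nm.1 + nm.2, nm.1 - nm.2)
      = ∑' pq : (ι → ℤ) × (ι → ℤ), (sameParity ι).indicator F pq := by
  have hinj : Function.Injective fun nm : (ι → ℤ) × (ι → ℤ) => (nm.1 + nm.2, nm.1 - nm.2) := by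
    rintro ⟨n, m⟩ ⟨n', m'⟩ h
    simp only [Prod.mk.injEq, funext_iff, Pi.add_apply, Pi.sub_apply] at h ⊢
    exact ⟨fun i => by linarith [h.1 i, h.2 i], fun i => by linarith [h.1 i, h.2 i]⟩
  rw [← hinj.tsum_eq (f := (sameParity ι).indicator F)]
  · refine tsum_congr fun nm => (Set.indicator_of_mem (fun i => ⟨nm.2 i, ?_⟩) F).symm
    simp only [Pi.add_apply, Pi.sub_apply]; ring
  · rintro ⟨p, q⟩ hpq
    choose k hk using Set.mem_of_indicator_ne_zero hpq
    exact ⟨(q + k, k), by ext i <;> simp; linarith [hk i]⟩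

section Theta

variable {g : ℕ}

theorem thetaChar_add_intCast_left (m₁ m₂ : Fin g → ℝ) (k : Fin g → ℤ)
    (τ : Matrix (Fin g) (Fin g) ℂ) (z : Fin g → ℂ) :
    thetaChar (m₁ + Int.cast ∘ k) m₂ τ z = thetaChar m₁ m₂ τ z := by
  have hshift (n : Fin g → ℤ) (i : Fin g) :
      (n i : ℂ) + ((m₁ + Int.cast ∘ k : Fin g → ℝ) i : ℂ) = ((n + k) i : ℂ) + (m₁ i : ℂ) := by
    simp only [Pi.add_apply, Function.comp_apply]; push_cast; ring
  simp only [thetaChar, hshift]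
  conv_rhs => rw [← (Equiv.addRight k).tsum_eq]
  rfl

theorem thetaChar_add_intCast_right (m₁ m₂ : Fin g → ℝ) (k : Fin g → ℤ)
    (τ : Matrix (Fin g) (Fin g) ℂ) (z : Fin g → ℂ) :
    thetaChar m₁ (m₂ + Int.cast ∘ k) τ z
      = cexp (2 * π * I * (m₁ ⬝ᵥ Int.cast ∘ k : ℝ)) * thetaChar m₁ m₂ τ z := by
  rw [thetaChar, thetaChar, ← tsum_mul_left]
  refine tsum_congr fun n => ?_
  rw [← exp_add, exp_eq_exp_iff_exists_int]
  refine ⟨∑ i, n i * k i, ?_⟩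
  have hsplit : ∑ i, ((n i : ℂ) + m₁ i) * (z i + ((m₂ + Int.cast ∘ k : Fin g → ℝ) i : ℂ))
      = ∑ i, ((n i : ℂ) + m₁ i) * (z i + m₂ i) + ((m₁ ⬝ᵥ Int.cast ∘ k : ℝ) : ℂ)
        + ((∑ i, n i * k i : ℤ) : ℂ) := by
    simp only [dotProduct, Pi.add_apply, Function.comp_apply]
    push_cast
    rw [← sum_add_distrib, ← sum_add_distrib]
    exact sum_congr rfl fun i _ => by ring
  rw [hsplit]
  ring

noncomputable def thetaExp (τ : Matrix (Fin g) (Fin g) ℂ) (β x : Fin g → ℝ) : ℂ :=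
  cexp (π * I * ((ofReal ∘ x) ⬝ᵥ τ *ᵥ (ofReal ∘ x)) + 2 * π * I * (x ⬝ᵥ β : ℝ))

theorem thetaChar_zero_eq_tsum (m₁ m₂ : Fin g → ℝ) (τ : Matrix (Fin g) (Fin g) ℂ) :
    thetaChar m₁ m₂ τ 0 = ∑' n : Fin g → ℤ, thetaExp τ m₂ (Int.cast ∘ n + m₁) := by
  refine tsum_congr fun n => ?_
  simp [thetaExp, dotProduct, mulVec, mul_sum, mul_assoc]

theorem norm_thetaExp (τ : Matrix (Fin g) (Fin g) ℂ) (β x : Fin g → ℝ) :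
    ‖thetaExp τ β x‖ = Real.exp (-(π * (x ⬝ᵥ τ.map im *ᵥ x))) := by
  have him : ((ofReal ∘ x) ⬝ᵥ τ *ᵥ (ofReal ∘ x)).im = x ⬝ᵥ τ.map im *ᵥ x := by
    simp [dotProduct, mulVec, im_sum, mul_sum]
  rw [thetaExp, norm_exp]
  simp [him]

theorem thetaExp_add_char (τ : Matrix (Fin g) (Fin g) ℂ) (β γ x : Fin g → ℝ) :
    thetaExp τ (β + γ) x = thetaExp τ β x * cexp (2 * π * I * (x ⬝ᵥ γ : ℝ)) := by
  rw [thetaExp, thetaExp, ← exp_add, dotProduct_add, ofReal_add]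
  ring_nf

theorem thetaExp_two_smul_mul (τ : Matrix (Fin g) (Fin g) ℂ) (β x y : Fin g → ℝ) :
    thetaExp ((2 : ℂ) • τ) β x * thetaExp ((2 : ℂ) • τ) β y
      = thetaExp τ β (x + y) * thetaExp τ 0 (x - y) := by
  simp only [thetaExp, ← exp_add, ofReal_comp_add, ofReal_comp_sub, smul_mulVec, mulVec_add,
    mulVec_sub, dotProduct_add, add_dotProduct, dotProduct_sub, sub_dotProduct, dotProduct_smul,
    smul_eq_mul, dotProduct_zero, ofReal_add, ofReal_zero]
  ring_nf

theorem thetaExp_add_char_mul_thetaExp_neg_char (τ : Matrix (Fin g) (Fin g) ℂ)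
    (a β γ x y : Fin g → ℝ) :
    cexp (-(4 * π * I * (a ⬝ᵥ γ : ℝ)))
        * (thetaExp τ (β + γ) (x + 2 • a) * thetaExp τ (-γ) y)
      = cexp (2 * π * I * ((x - y) ⬝ᵥ γ : ℝ))
          * (thetaExp τ β (x + 2 • a) * thetaExp τ 0 y) := by
  have hexp : cexp (-(4 * π * I * (a ⬝ᵥ γ : ℝ)))
      * cexp (2 * π * I * ((x + 2 • a) ⬝ᵥ γ : ℝ)) * cexp (2 * π * I * (y ⬝ᵥ -γ : ℝ))
        = cexp (2 * π * I * ((x - y) ⬝ᵥ γ : ℝ)) := by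
    simp only [← exp_add, add_dotProduct, sub_dotProduct, smul_dotProduct, dotProduct_neg]
    push_cast
    ring_nf
  rw [thetaExp_add_char, ← zero_add (-γ), thetaExp_add_char, ← hexp]
  ring

theorem summable_norm_thetaExp {τ : Matrix (Fin g) (Fin g) ℂ} (hpos : (τ.map im).PosDef)
    (β r : Fin g → ℝ) :
    Summable fun n : Fin g → ℤ => ‖thetaExp τ β (Int.cast ∘ n + r)‖ := by
  obtain ⟨ε, hε, hle⟩ := hpos.exists_pos_mul_dotProduct_self_le
  have hgauss := summable_fin_prod_of_nonneg
    (fun i (m : ℤ) => Real.exp (-π * (m + r i) ^ 2 * ε)) (fun _ _ => (Real.exp_pos _).le)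
    fun i => (HurwitzKernelBounds.summable_f_int 0 (r i) hε).congr fun m => by
      simp [HurwitzKernelBounds.f_int]
  refine hgauss.of_nonneg_of_le (fun _ => norm_nonneg _) fun n => ?_
  rw [norm_thetaExp, ← Real.exp_sum, Real.exp_le_exp]
  set x : Fin g → ℝ := Int.cast ∘ n + r
  calc -(π * (x ⬝ᵥ τ.map im *ᵥ x)) ≤ -(π * (ε * (x ⬝ᵥ x))) := by
        gcongr; exact hle x
    _ = ∑ i, -π * x i ^ 2 * ε := by
        simp only [dotProduct, mul_sum, ← sum_neg_distrib]
        exact sum_congr rfl fun i _ => by ring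

theorem sum_exp_two_pi_I_intCast_dotProduct_halfChar (k : Fin g → ℤ) :
    ∑ c : Fin g → Bool, cexp (2 * π * I * ((Int.cast ∘ k) ⬝ᵥ halfChar c : ℝ))
      = if ∀ i, Even (k i) then (2 ^ g : ℂ) else 0 := by
  have hfactor (i : Fin g) :
      ∑ b : Bool, cexp (2 * π * I * (k i * if b then (1 / 2 : ℝ) else 0 : ℝ))
        = (-1) ^ k i + 1 := by
    rw [Fintype.sum_bool, ← exp_pi_mul_I, ← exp_int_mul]
    simp only [if_true, Bool.false_eq_true, if_false, mul_zero, ofReal_zero, exp_zero]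
    push_cast
    ring_nf
  simp only [dotProduct, Function.comp_apply, halfChar, ofReal_sum, mul_sum, exp_sum]
  rw [← Fintype.prod_sum (fun i (b : Bool) =>
      cexp (2 * π * I * (k i * if b then (1 / 2 : ℝ) else 0 : ℝ))),
    prod_congr rfl fun i _ => hfactor i]
  split_ifs with heven
  · rw [prod_congr rfl fun i _ => by rw [(heven i).neg_one_zpow]]
    norm_num
  · push Not at heven
    obtain ⟨i, hi⟩ := heven
    exact prod_eq_zero (mem_univ i) (by rw [(Int.not_even_iff_odd.mp hi).neg_one_zpow]; norm_num)

theorem thetaChar_two_smul_sq_eq_tsum {τ : Matrix (Fin g) (Fin g) ℂ}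
    (hpos : (τ.map im).PosDef) (a b : Fin g → ℝ) :
    thetaChar a b ((2 : ℂ) • τ) 0 ^ 2
      = ∑' pq, (sameParity (Fin g)).indicator
          (fun pq => thetaExp τ b (Int.cast ∘ pq.1 + 2 • a) * thetaExp τ 0 (Int.cast ∘ pq.2))
          pq := by
  have h2pos : (((2 : ℂ) • τ).map im).PosDef := by
    convert hpos.smul (zero_lt_two' ℝ) using 1
    ext i j; simp
  have hsum := summable_norm_thetaExp h2pos b a
  rw [thetaChar_zero_eq_tsum, sq, tsum_mul_tsum_of_summable_norm hsum hsum, ← tsum_comp_add_sub]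
  refine tsum_congr fun nm => ?_
  rw [thetaExp_two_smul_mul]
  congr 2 <;> ext i <;> simp; ring

theorem indicator_sameParity_eq_sum_halfChar (τ : Matrix (Fin g) (Fin g) ℂ) (a b : Fin g → ℝ)
    (pq : (Fin g → ℤ) × (Fin g → ℤ)) :
    (sameParity (Fin g)).indicator
        (fun pq => thetaExp τ b (Int.cast ∘ pq.1 + 2 • a) * thetaExp τ 0 (Int.cast ∘ pq.2)) pq
      = (2 ^ g : ℂ)⁻¹ * ∑ c : Fin g → Bool, cexp (-(4 * π * I * (a ⬝ᵥ halfChar c : ℝ)))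
          * (thetaExp τ (b + halfChar c) (Int.cast ∘ pq.1 + 2 • a)
            * thetaExp τ (-halfChar c) (Int.cast ∘ pq.2)) := by
  have hpq : (Int.cast ∘ pq.1 - Int.cast ∘ pq.2 : Fin g → ℝ) = Int.cast ∘ (pq.1 - pq.2) := by
    ext i; simp
  simp only [thetaExp_add_char_mul_thetaExp_neg_char, ← sum_mul, hpq,
    sum_exp_two_pi_I_intCast_dotProduct_halfChar, Set.indicator_apply, sameParity,
    Set.mem_ofPred_eq, Pi.sub_apply]
  split_ifs <;> simp

theorem thetaChar_two_smul_sq {τ : Matrix (Fin g) (Fin g) ℂ} (hpos : (τ.map im).PosDef)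
    (a b : Fin g → ℝ) :
    thetaChar a b ((2 : ℂ) • τ) 0 ^ 2
      = (2 ^ g : ℂ)⁻¹ * ∑ c : Fin g → Bool, cexp (-(4 * π * I * (a ⬝ᵥ halfChar c : ℝ)))
          * (thetaChar (2 • a) (b + halfChar c) τ 0 * thetaChar 0 (-halfChar c) τ 0) := by
  have hA (c : Fin g → Bool) := summable_norm_thetaExp hpos (b + halfChar c) (2 • a)
  have hB (c : Fin g → Bool) := summable_norm_thetaExp hpos (-halfChar c) 0
  simp only [add_zero] at hB
  rw [thetaChar_two_smul_sq_eq_tsum hpos, tsum_congr (indicator_sameParity_eq_sum_halfChar τ a b),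
    tsum_mul_left, Summable.tsum_finsetSum fun c _ =>
      (summable_mul_of_summable_norm (hA c) (hB c)).mul_left _]
  simp only [tsum_mul_left, ← tsum_mul_tsum_of_summable_norm (hA _) (hB _),
    thetaChar_zero_eq_tsum, add_zero]

theorem norm_sq_thetaChar_two_smul_le {τ : Matrix (Fin g) (Fin g) ℂ}
    (hpos : (τ.map im).PosDef) (a b : Fin g → ℝ) {M : ℝ}
    (hM : ∀ c, ‖thetaChar (2 • a) (b + halfChar c) τ 0‖ * ‖thetaChar 0 (-halfChar c) τ 0‖ ≤ M) :
    ‖thetaChar a b ((2 : ℂ) • τ) 0‖ ^ 2 ≤ M := by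
  rw [← norm_pow, thetaChar_two_smul_sq hpos]
  calc _ ≤ (2 ^ g : ℝ)⁻¹ * ∑ c : Fin g → Bool, ‖cexp (-(4 * π * I * (a ⬝ᵥ halfChar c : ℝ)))
          * (thetaChar (2 • a) (b + halfChar c) τ 0 * thetaChar 0 (-halfChar c) τ 0)‖ := by
        rw [norm_mul, norm_inv, norm_pow, Complex.norm_two]
        gcongr
        exact norm_sum_le _ _
    _ ≤ (2 ^ g : ℝ)⁻¹ * ∑ _c : Fin g → Bool, M := by
        gcongr with c
        rw [norm_mul, norm_mul, norm_exp]
        simpa using hM c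
    _ = M := by simp

theorem halfChar_false : halfChar (fun _ : Fin g => false) = 0 := by
  ext i; simp [halfChar]

theorem thetaChar_two_smul_halfChar (b : Fin g → Bool) (m₂ : Fin g → ℝ)
    (τ : Matrix (Fin g) (Fin g) ℂ) (z : Fin g → ℂ) :
    thetaChar (2 • halfChar b) m₂ τ z = thetaChar 0 m₂ τ z := by
  convert thetaChar_add_intCast_left 0 m₂ (fun i => if b i then 1 else 0) τ z using 2
  ext i; by_cases h : b i <;> simp [halfChar, h]

theorem thetaChar_zero_halfChar_add_halfChar (b c : Fin g → Bool)
    (τ : Matrix (Fin g) (Fin g) ℂ) (z : Fin g → ℂ) :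
    thetaChar 0 (halfChar b + halfChar c) τ z
      = thetaChar 0 (halfChar fun i => xor (b i) (c i)) τ z := by
  have hcarry : halfChar b + halfChar c
      = halfChar (fun i => xor (b i) (c i)) + Int.cast ∘ fun i => if b i && c i then 1 else 0 := by
    ext i
    simp only [Pi.add_apply, Function.comp_apply, halfChar]
    by_cases hb : b i <;> by_cases hc : c i <;> norm_num [hb, hc]
  simp [hcarry, thetaChar_add_intCast_right]

theorem thetaChar_zero_neg_halfChar (c : Fin g → Bool) (τ : Matrix (Fin g) (Fin g) ℂ)
    (z : Fin g → ℂ) :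
    thetaChar 0 (-halfChar c) τ z = thetaChar 0 (halfChar c) τ z := by
  have hneg : -halfChar c = halfChar c + Int.cast ∘ fun i => if c i then -1 else 0 := by
    ext i
    simp only [Pi.neg_apply, Pi.add_apply, Function.comp_apply, halfChar]
    cases c i <;> norm_num
  simp [hneg, thetaChar_add_intCast_right]

end Theta

theorem thetaNullwerte_max_duplication_general (g : ℕ)
    (τ : Matrix (Fin g) (Fin g) ℂ)
    (hpos : (Matrix.of fun i j => (τ i j).im).PosDef) :
    (Finset.univ.sup' Finset.univ_nonempty
        fun p : (Fin g → Bool) × (Fin g → Bool) =>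
          ‖thetaChar (halfChar p.1) (halfChar p.2) ((2 : ℂ) • τ) 0‖)
      ≤ Finset.univ.sup' Finset.univ_nonempty
        fun p : (Fin g → Bool) × (Fin g → Bool) =>
          ‖thetaChar (halfChar p.1) (halfChar p.2) τ 0‖ := by
  set M := Finset.univ.sup' Finset.univ_nonempty
    fun p : (Fin g → Bool) × (Fin g → Bool) => ‖thetaChar (halfChar p.1) (halfChar p.2) τ 0‖
  have hM (c : Fin g → Bool) : ‖thetaChar 0 (halfChar c) τ 0‖ ≤ M := by
    simpa [halfChar_false] using le_sup' (fun p : (Fin g → Bool) × (Fin g → Bool) =>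
      ‖thetaChar (halfChar p.1) (halfChar p.2) τ 0‖) (mem_univ (fun _ => false, c))
  have hM0 : 0 ≤ M := (norm_nonneg _).trans (hM fun _ => false)
  refine sup'_le _ _ fun p _ => le_of_pow_le_pow_left₀ two_ne_zero hM0 ?_
  refine norm_sq_thetaChar_two_smul_le hpos _ _ fun c => ?_
  rw [thetaChar_two_smul_halfChar, thetaChar_zero_halfChar_add_halfChar,
    thetaChar_zero_neg_halfChar, sq]
  exact mul_le_mul (hM _) (hM c) (norm_nonneg _) hM0

/-- `F(τ) = max_{(m₁,m₂)∈{0,1/2}^{2g}} |θ_{(m₁,m₂)}(τ,0)|` satisfies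
`F(τ) ≥ F(2τ)` for every `τ` in the Siegel upper half space. -/
theorem thetaNullwerte_max_duplication (g : ℕ) (hg : 1 ≤ g)
    (τ : Matrix (Fin g) (Fin g) ℂ) (hsym : τ.IsSymm)
    (hpos : (Matrix.of fun i j => (τ i j).im).PosDef) :
    (Finset.univ.sup' Finset.univ_nonempty
        fun p : (Fin g → Bool) × (Fin g → Bool) =>
          ‖thetaChar (halfChar p.1) (halfChar p.2) ((2 : ℂ) • τ) 0‖)
      ≤ Finset.univ.sup' Finset.univ_nonempty
        fun p : (Fin g → Bool) × (Fin g → Bool) =>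
          ‖thetaChar (halfChar p.1) (halfChar p.2) τ 0‖ :=
  thetaNullwerte_max_duplication_general g τ hpos
end

section
/- For every τ ∈ 𝔖_g, the maximum over (m₁,m₂) ∈ {0,1/2}^{2g} of |θ_{(m₁,m₂)}(τ,0)| is at least 1. -/
/-
Only the characteristics `(0, e/2)` are needed. Write `θ_e(τ) = θ_{(0,e/2)}(τ,0)`. Summing the
double series of `θ_{b+e}(τ) θ_b(τ)` over `b ∈ {0,1}^g` kills the pairs `(x, y)` with `x ≢ y mod 2`,
and substituting `(x, y) = (u + v, u - v)` in the rest gives the duplication formula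
`∑_b θ_{b+e}(τ) θ_b(τ) = 2^g θ_e(2τ)²`. With AM-GM it shows that `A(τ) = ∑_e |θ_e(τ)|²` satisfies
`A(2τ) ≤ A(τ)`. Since `θ_e(2^k τ) → 1`, we get `A(τ) ≥ lim_k A(2^k τ) = 2^g`, so some `|θ_e(τ)|`
is at least `1`.
-/

open Complex Matrix Finset Filter Topology

theorem Matrix.PosDef.exists_pos_mul_sum_sq_le {ι : Type*} [Fintype ι] {A : Matrix ι ι ℝ}
    (hA : A.PosDef) : ∃ c > 0, ∀ x : ι → ℝ, c * ∑ i, x i ^ 2 ≤ x ⬝ᵥ A *ᵥ x := by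
  rcases isEmpty_or_nonempty ι with hι | hι
  · exact ⟨1, one_pos, fun x => by simp⟩
  set Q : EuclideanSpace ℝ ι → ℝ := fun y => y.ofLp ⬝ᵥ A *ᵥ y.ofLp
  obtain ⟨u₀, hu₀, hmin⟩ := (isCompact_sphere (0 : EuclideanSpace ℝ ι) 1).exists_isMinOn
    (NormedSpace.sphere_nonempty.2 zero_le_one) (by fun_prop : Continuous Q).continuousOn
  have hQ_smul (t : ℝ) (y : EuclideanSpace ℝ ι) : Q (t • y) = t ^ 2 * Q y := by
    simp only [Q, WithLp.ofLp_smul, mulVec_smul, dotProduct_smul, smul_dotProduct, smul_eq_mul]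
    ring
  refine ⟨Q u₀, ?_, fun x => ?_⟩
  · have : u₀.ofLp ≠ 0 := by
      intro h; simp [show u₀ = 0 from by simpa using h] at hu₀
    simpa using hA.dotProduct_mulVec_pos this
  rcases eq_or_ne x 0 with rfl | hx
  · simp
  set y : EuclideanSpace ℝ ι := WithLp.toLp 2 x
  have hr : 0 < ‖y‖ := norm_pos_iff.2 (by simpa [y] using hx)
  have hmem : ‖y‖⁻¹ • y ∈ Metric.sphere (0 : EuclideanSpace ℝ ι) 1 := by
    simp [norm_smul, hr.ne']
  calc Q u₀ * ∑ i, x i ^ 2 = Q u₀ * ‖y‖ ^ 2 := by simp [y, EuclideanSpace.norm_sq_eq]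
    _ ≤ Q (‖y‖⁻¹ • y) * ‖y‖ ^ 2 := by gcongr; exact hmin hmem
    _ = x ⬝ᵥ A *ᵥ x := by rw [hQ_smul]; field_simp; rfl

lemma summable_finPi_prod_of_nonneg {β : Type*} :
    ∀ {m : ℕ} {f : Fin m → β → ℝ}, (∀ i a, 0 ≤ f i a) → (∀ i, Summable (f i)) →
      Summable fun n : Fin m → β => ∏ i, f i (n i)
  | 0, _, _, _ => .of_finite
  | m + 1, f, hf0, hf => by
    have htail : Summable fun q : Fin m → β => ∏ i, f i.succ (q i) :=
      summable_finPi_prod_of_nonneg (fun i => hf0 i.succ) fun i => hf i.succ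
    rw [← (Fin.consEquiv fun _ => β).summable_iff]
    convert (hf 0).mul_of_nonneg htail (hf0 0) fun q => prod_nonneg fun i _ => hf0 i.succ (q i)
      using 2 with p
    simp [Fin.prod_univ_succ]

lemma summable_exp_neg_pi_mul_sq {c : ℝ} (hc : 0 < c) :
    Summable fun a : ℤ => Real.exp (-Real.pi * c * a ^ 2) := by
  have := ((summable_jacobiTheta₂_term_iff 0 (c * I)).2 (by simpa using hc)).norm
  simpa [norm_jacobiTheta₂_term, mul_right_comm _ c] using this

lemma summable_exp_neg_pi_mul_sum_sq {m : ℕ} {c : ℝ} (hc : 0 < c) :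
    Summable fun n : Fin m → ℤ => Real.exp (-Real.pi * c * ∑ i, (n i : ℝ) ^ 2) := by
  simpa only [mul_sum, Real.exp_sum] using
    summable_finPi_prod_of_nonneg (fun _ _ => (Real.exp_pos _).le) fun _ =>
      summable_exp_neg_pi_mul_sq hc

lemma injective_add_sub {ι : Type*} :
    Function.Injective fun q : (ι → ℤ) × (ι → ℤ) => (q.1 + q.2, q.1 - q.2) := by
  intro q q' h
  simp only [Prod.mk.injEq, funext_iff, Pi.add_apply, Pi.sub_apply] at h
  ext i <;> have := h.1 i <;> have := h.2 i <;> omega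

lemma mem_range_add_sub_of_even {ι : Type*} {p : (ι → ℤ) × (ι → ℤ)}
    (h : ∀ i, Even (p.1 i + p.2 i)) :
    p ∈ Set.range fun q : (ι → ℤ) × (ι → ℤ) => (q.1 + q.2, q.1 - q.2) := by
  refine ⟨(fun i => (p.1 i + p.2 i) / 2, fun i => (p.1 i - p.2 i) / 2), ?_⟩
  ext i <;> simp only [Pi.add_apply, Pi.sub_apply] <;> have := (h i).two_dvd <;> omega

namespace SiegelTheta

variable {g : ℕ}

def quadForm {R : Type*} [Ring R] (A : Matrix (Fin g) (Fin g) R) (n : Fin g → ℤ) : R :=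
  (fun i => (n i : R)) ⬝ᵥ A *ᵥ (fun i => (n i : R))

lemma quadForm_add_add_quadForm_sub {R : Type*} [Ring R] (A : Matrix (Fin g) (Fin g) R)
    (u v : Fin g → ℤ) :
    quadForm A (u + v) + quadForm A (u - v) = 2 * quadForm A u + 2 * quadForm A v := by
  have hadd : (fun i => ((u + v) i : R)) = (fun i => (u i : R)) + fun i => (v i : R) := by
    ext i; simp
  have hsub : (fun i => ((u - v) i : R)) = (fun i => (u i : R)) - fun i => (v i : R) := by
    ext i; simp
  simp only [quadForm, hadd, hsub, add_dotProduct, sub_dotProduct, mulVec_add, mulVec_sub,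
    dotProduct_add, dotProduct_sub]
  noncomm_ring

lemma quadForm_smul {R S : Type*} [Ring R] [Monoid S] [DistribMulAction S R]
    [IsScalarTower S R R] [SMulCommClass S R R] (c : S) (A : Matrix (Fin g) (Fin g) R)
    (n : Fin g → ℤ) :
    quadForm (c • A) n = c • quadForm A n := by
  simp only [quadForm, smul_mulVec, dotProduct_smul]

lemma im_quadForm (τ : Matrix (Fin g) (Fin g) ℂ) (n : Fin g → ℤ) :
    (quadForm τ n).im = quadForm (τ.map im) n := by
  simp [quadForm, dotProduct, mulVec, im_sum, mul_im, mul_sum]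

lemma quadForm_pos {A : Matrix (Fin g) (Fin g) ℝ} (hA : A.PosDef) {n : Fin g → ℤ} (hn : n ≠ 0) :
    0 < quadForm A n := by
  have hx : (fun i => (n i : ℝ)) ≠ 0 := fun h => hn (funext fun i => by simpa using congrFun h i)
  simpa [quadForm] using hA.dotProduct_mulVec_pos hx

lemma quadForm_nonneg {A : Matrix (Fin g) (Fin g) ℝ} (hA : A.PosSemidef) (n : Fin g → ℤ) :
    0 ≤ quadForm A n :=
  hA.dotProduct_mulVec_nonneg _

noncomputable def signChar (e : Fin g → Bool) (n : Fin g → ℤ) : ℂ :=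
  ∏ i, if e i then (-1) ^ n i else 1

lemma signChar_add (e : Fin g → Bool) (x y : Fin g → ℤ) :
    signChar e (x + y) = signChar e x * signChar e y := by
  simp only [signChar, ← prod_mul_distrib, Pi.add_apply]
  refine prod_congr rfl fun i _ => ?_
  split_ifs
  · exact zpow_add₀ (by norm_num) _ _
  · rw [mul_one]

lemma signChar_xor (b e : Fin g → Bool) (n : Fin g → ℤ) :
    signChar (fun i => b i ^^ e i) n = signChar b n * signChar e n := by
  simp only [signChar, ← prod_mul_distrib]
  refine prod_congr rfl fun i _ => ?_
  by_cases hb : b i <;> by_cases he : e i <;> simp [hb, he, ← mul_zpow]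

lemma sum_signChar (w : Fin g → ℤ) :
    ∑ b, signChar b w = ∏ i, (1 + (-1) ^ w i) := by
  simp only [signChar, ← Fintype.prod_sum (fun i (s : Bool) => if s then (-1 : ℂ) ^ w i else 1),
    Fintype.sum_bool, Bool.false_eq_true, ↓reduceIte, add_comm]

lemma sum_signChar_of_odd {w : Fin g → ℤ} {i : Fin g} (hi : Odd (w i)) :
    ∑ b, signChar b w = 0 := by
  rw [sum_signChar]
  exact prod_eq_zero (mem_univ i) (by rw [hi.neg_one_zpow]; ring)

lemma sum_signChar_of_even {w : Fin g → ℤ} (hw : ∀ i, Even (w i)) :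
    ∑ b, signChar b w = 2 ^ g := by
  rw [sum_signChar]
  simp [(hw _).neg_one_zpow, one_add_one_eq_two]

lemma norm_signChar (e : Fin g → Bool) (n : Fin g → ℤ) : ‖signChar e n‖ = 1 := by
  simp only [signChar, norm_prod]
  exact prod_eq_one fun i _ => by split_ifs <;> simp

lemma map_im_smul (c : ℝ) (τ : Matrix (Fin g) (Fin g) ℂ) : (c • τ).map im = c • τ.map im := by
  ext; simp

lemma posDef_map_im_smul {τ : Matrix (Fin g) (Fin g) ℂ} (hτ : (τ.map im).PosDef) {c : ℝ}
    (hc : 0 < c) : ((c • τ).map im).PosDef := by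
  rw [map_im_smul]
  exact hτ.smul hc

noncomputable def thetaTerm (τ : Matrix (Fin g) (Fin g) ℂ) (e : Fin g → Bool) (n : Fin g → ℤ) :
    ℂ :=
  cexp (Real.pi * I * quadForm τ n) * signChar e n

/-- `θ_{(0,e/2)}(τ, 0)`, with `exp(2πi nᵀe/2)` written as the sign `signChar e n`. -/
noncomputable def thetaHalf (τ : Matrix (Fin g) (Fin g) ℂ) (e : Fin g → Bool) : ℂ :=
  ∑' n, thetaTerm τ e n

lemma thetaTerm_zero (τ : Matrix (Fin g) (Fin g) ℂ) (e : Fin g → Bool) : thetaTerm τ e 0 = 1 := by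
  simp [thetaTerm, quadForm, signChar]

lemma norm_thetaTerm (τ : Matrix (Fin g) (Fin g) ℂ) (e : Fin g → Bool) (n : Fin g → ℤ) :
    ‖thetaTerm τ e n‖ = Real.exp (-Real.pi * quadForm (τ.map im) n) := by
  simp [thetaTerm, norm_signChar, Complex.norm_exp, ← im_quadForm]

lemma summable_norm_thetaTerm {τ : Matrix (Fin g) (Fin g) ℂ} (hτ : (τ.map im).PosDef)
    (e : Fin g → Bool) : Summable fun n => ‖thetaTerm τ e n‖ := by
  obtain ⟨c, hc, hle⟩ := hτ.exists_pos_mul_sum_sq_le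
  refine (summable_exp_neg_pi_mul_sum_sq hc).of_nonneg_of_le (fun _ => norm_nonneg _) fun n => ?_
  rw [norm_thetaTerm, Real.exp_le_exp, mul_assoc, neg_mul, neg_mul, neg_le_neg_iff]
  exact mul_le_mul_of_nonneg_left (hle _) Real.pi_pos.le

lemma tendsto_thetaHalf_two_pow_smul {τ : Matrix (Fin g) (Fin g) ℂ} (hτ : (τ.map im).PosDef)
    (e : Fin g → Bool) :
    Tendsto (fun k : ℕ => thetaHalf ((2 : ℝ) ^ k • τ) e) atTop (𝓝 1) := by
  have hnorm (k : ℕ) (n : Fin g → ℤ) : ‖thetaTerm ((2 : ℝ) ^ k • τ) e n‖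
      = Real.exp (-Real.pi * (2 ^ k * quadForm (τ.map im) n)) := by
    rw [norm_thetaTerm, map_im_smul, quadForm_smul, smul_eq_mul]
  have hpoint (n : Fin g → ℤ) : Tendsto (fun k : ℕ => thetaTerm ((2 : ℝ) ^ k • τ) e n) atTop
      (𝓝 (if n = 0 then 1 else 0)) := by
    split_ifs with hn
    · simp [hn, thetaTerm_zero]
    rw [tendsto_zero_iff_norm_tendsto_zero]
    simp only [hnorm]
    exact Real.tendsto_exp_atBot.comp <|
      ((tendsto_pow_atTop_atTop_of_one_lt one_lt_two).atTop_mul_const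
        (quadForm_pos hτ hn)).const_mul_atTop_of_neg (neg_neg_of_pos Real.pi_pos)
  have hbound (k : ℕ) (n : Fin g → ℤ) :
      ‖thetaTerm ((2 : ℝ) ^ k • τ) e n‖ ≤ ‖thetaTerm τ e n‖ := by
    rw [hnorm, norm_thetaTerm, Real.exp_le_exp, neg_mul, neg_mul, neg_le_neg_iff]
    exact mul_le_mul_of_nonneg_left (le_mul_of_one_le_left (quadForm_nonneg hτ.posSemidef n)
      (one_le_pow₀ one_le_two)) Real.pi_pos.le
  simpa [thetaHalf] using
    tendsto_tsum_of_dominated_convergence (summable_norm_thetaTerm hτ e) hpoint (.of_forall hbound)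

lemma sum_thetaTerm_xor_mul (τ : Matrix (Fin g) (Fin g) ℂ) (e : Fin g → Bool)
    (x y : Fin g → ℤ) :
    ∑ b, thetaTerm τ (fun i => b i ^^ e i) x * thetaTerm τ b y =
      cexp (Real.pi * I * quadForm τ x) * cexp (Real.pi * I * quadForm τ y) * signChar e x *
        ∑ b, signChar b (x + y) := by
  simp only [mul_sum, thetaTerm, signChar_xor, signChar_add]
  exact sum_congr rfl fun b _ => by ring

lemma sum_thetaTerm_xor_mul_of_odd (τ : Matrix (Fin g) (Fin g) ℂ) (e : Fin g → Bool)
    {x y : Fin g → ℤ} {i : Fin g} (hi : Odd (x i + y i)) :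
    ∑ b, thetaTerm τ (fun i => b i ^^ e i) x * thetaTerm τ b y = 0 := by
  rw [sum_thetaTerm_xor_mul, sum_signChar_of_odd (i := i) hi, mul_zero]

lemma sum_thetaTerm_xor_mul_add_sub (τ : Matrix (Fin g) (Fin g) ℂ) (e : Fin g → Bool)
    (u v : Fin g → ℤ) :
    ∑ b, thetaTerm τ (fun i => b i ^^ e i) (u + v) * thetaTerm τ b (u - v) =
      2 ^ g * (thetaTerm ((2 : ℝ) • τ) e u * thetaTerm ((2 : ℝ) • τ) e v) := by
  have heven : ∀ i, Even ((u + v + (u - v)) i) := fun i => ⟨u i, by simp⟩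
  have hQ : Real.pi * I * quadForm τ (u + v) + Real.pi * I * quadForm τ (u - v) =
      Real.pi * I * quadForm ((2 : ℝ) • τ) u + Real.pi * I * quadForm ((2 : ℝ) • τ) v := by
    simp only [quadForm_smul, Complex.real_smul, ofReal_ofNat]
    linear_combination Real.pi * I * quadForm_add_add_quadForm_sub τ u v
  rw [sum_thetaTerm_xor_mul, sum_signChar_of_even heven, ← Complex.exp_add, hQ, Complex.exp_add,
    signChar_add]
  simp only [thetaTerm]
  ring

theorem sum_thetaHalf_xor_mul {τ : Matrix (Fin g) (Fin g) ℂ} (hτ : (τ.map im).PosDef)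
    (e : Fin g → Bool) :
    ∑ b, thetaHalf τ (fun i => b i ^^ e i) * thetaHalf τ b =
      2 ^ g * thetaHalf ((2 : ℝ) • τ) e ^ 2 := by
  have hs := summable_norm_thetaTerm hτ
  have hs₂ := summable_norm_thetaTerm (posDef_map_im_smul hτ two_pos) e
  set F : (Fin g → ℤ) × (Fin g → ℤ) → ℂ :=
    fun p => ∑ b, thetaTerm τ (fun i => b i ^^ e i) p.1 * thetaTerm τ b p.2
  have hsupp : Function.support F ⊆
      Set.range fun q : (Fin g → ℤ) × (Fin g → ℤ) => (q.1 + q.2, q.1 - q.2) := by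
    refine Function.support_subset_iff'.2 fun p hp => ?_
    obtain ⟨i, hi⟩ : ∃ i, Odd (p.1 i + p.2 i) := by
      simpa [Int.not_even_iff_odd] using mt mem_range_add_sub_of_even hp
    exact sum_thetaTerm_xor_mul_of_odd τ e hi
  calc ∑ b, thetaHalf τ (fun i => b i ^^ e i) * thetaHalf τ b
      = ∑ b, ∑' p : (Fin g → ℤ) × (Fin g → ℤ),
          thetaTerm τ (fun i => b i ^^ e i) p.1 * thetaTerm τ b p.2 := by
        simp only [thetaHalf, tsum_mul_tsum_of_summable_norm (hs _) (hs _)]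
    _ = ∑' p, F p :=
        (Summable.tsum_finsetSum fun b _ => summable_mul_of_summable_norm (hs _) (hs _)).symm
    _ = ∑' q : (Fin g → ℤ) × (Fin g → ℤ), F (q.1 + q.2, q.1 - q.2) :=
        (injective_add_sub.tsum_eq hsupp).symm
    _ = ∑' q : (Fin g → ℤ) × (Fin g → ℤ),
          2 ^ g * (thetaTerm ((2 : ℝ) • τ) e q.1 * thetaTerm ((2 : ℝ) • τ) e q.2) :=
        tsum_congr fun q => sum_thetaTerm_xor_mul_add_sub τ e q.1 q.2
    _ = 2 ^ g * thetaHalf ((2 : ℝ) • τ) e ^ 2 := by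
        rw [tsum_mul_left, thetaHalf, sq, tsum_mul_tsum_of_summable_norm hs₂ hs₂]

noncomputable def thetaSqSum (τ : Matrix (Fin g) (Fin g) ℂ) : ℝ :=
  ∑ e, ‖thetaHalf τ e‖ ^ 2

lemma sum_norm_sq_thetaHalf_xor (τ : Matrix (Fin g) (Fin g) ℂ) (e : Fin g → Bool) :
    ∑ b : Fin g → Bool, ‖thetaHalf τ (fun i => b i ^^ e i)‖ ^ 2 = thetaSqSum τ :=
  Equiv.sum_comp (Function.Involutive.toPerm (fun (b : Fin g → Bool) i => b i ^^ e i)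
    fun b => by simp) fun b => ‖thetaHalf τ b‖ ^ 2

lemma two_pow_mul_norm_sq_thetaHalf_two_smul_le {τ : Matrix (Fin g) (Fin g) ℂ}
    (hτ : (τ.map im).PosDef) (e : Fin g → Bool) :
    2 ^ g * ‖thetaHalf ((2 : ℝ) • τ) e‖ ^ 2 ≤ thetaSqSum τ := by
  set θ := thetaHalf τ
  calc 2 ^ g * ‖thetaHalf ((2 : ℝ) • τ) e‖ ^ 2 = ‖∑ b, θ (fun i => b i ^^ e i) * θ b‖ := by
        simp [θ, sum_thetaHalf_xor_mul hτ]
    _ ≤ ∑ b : Fin g → Bool, ‖θ (fun i => b i ^^ e i)‖ * ‖θ b‖ := by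
        simpa only [norm_mul] using norm_sum_le univ fun b => θ (fun i => b i ^^ e i) * θ b
    _ ≤ ∑ b, (‖θ (fun i => b i ^^ e i)‖ ^ 2 + ‖θ b‖ ^ 2) / 2 := by
        refine sum_le_sum fun b _ => ?_
        linarith [two_mul_le_add_sq ‖θ (fun i => b i ^^ e i)‖ ‖θ b‖]
    _ = thetaSqSum τ := by
        rw [← sum_div, sum_add_distrib, sum_norm_sq_thetaHalf_xor, thetaSqSum]
        ring

lemma thetaSqSum_two_smul_le {τ : Matrix (Fin g) (Fin g) ℂ} (hτ : (τ.map im).PosDef) :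
    thetaSqSum ((2 : ℝ) • τ) ≤ thetaSqSum τ :=
  calc thetaSqSum ((2 : ℝ) • τ) ≤ ∑ _e : Fin g → Bool, thetaSqSum τ / 2 ^ g :=
        sum_le_sum fun e _ => (le_div_iff₀' (by positivity)).2
          (two_pow_mul_norm_sq_thetaHalf_two_smul_le hτ e)
    _ = thetaSqSum τ := by simp [mul_div_cancel₀]

lemma thetaSqSum_two_pow_smul_le {τ : Matrix (Fin g) (Fin g) ℂ} (hτ : (τ.map im).PosDef)
    (k : ℕ) : thetaSqSum ((2 : ℝ) ^ k • τ) ≤ thetaSqSum τ := by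
  induction k with
  | zero => simp
  | succ k ih =>
    calc thetaSqSum ((2 : ℝ) ^ (k + 1) • τ) = thetaSqSum ((2 : ℝ) • (2 : ℝ) ^ k • τ) := by
          rw [pow_succ', mul_smul]
      _ ≤ thetaSqSum ((2 : ℝ) ^ k • τ) :=
          thetaSqSum_two_smul_le (posDef_map_im_smul hτ (by positivity))
      _ ≤ thetaSqSum τ := ih

lemma two_pow_le_thetaSqSum {τ : Matrix (Fin g) (Fin g) ℂ} (hτ : (τ.map im).PosDef) :
    2 ^ g ≤ thetaSqSum τ := by
  have hlim : Tendsto (fun k : ℕ => thetaSqSum ((2 : ℝ) ^ k • τ)) atTop (𝓝 (2 ^ g)) := by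
    simpa [thetaSqSum] using
      tendsto_finsetSum univ fun e _ => (tendsto_thetaHalf_two_pow_smul hτ e).norm.pow 2
  exact le_of_tendsto' hlim (thetaSqSum_two_pow_smul_le hτ)

lemma exists_one_le_norm_thetaHalf {τ : Matrix (Fin g) (Fin g) ℂ} (hτ : (τ.map im).PosDef) :
    ∃ e, 1 ≤ ‖thetaHalf τ e‖ := by
  by_contra! h
  have : thetaSqSum τ < 2 ^ g :=
    calc thetaSqSum τ < ∑ _e : Fin g → Bool, 1 :=
          sum_lt_sum_of_nonempty univ_nonempty fun e _ =>
            pow_lt_one₀ (norm_nonneg _) (h e) two_ne_zero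
      _ = 2 ^ g := by simp
  linarith [two_pow_le_thetaSqSum hτ]

lemma cexp_two_pi_I_mul_halfChar (b : Bool) (n : ℤ) :
    cexp (2 * Real.pi * I * (n * ((if b then (1 / 2 : ℝ) else 0 : ℝ) : ℂ))) =
      if b then (-1) ^ n else 1 := by
  split_ifs
  · rw [← Complex.exp_pi_mul_I, ← Complex.exp_int_mul]
    congr 1
    push_cast
    ring
  · simp

lemma thetaChar_zero_halfChar (τ : Matrix (Fin g) (Fin g) ℂ) (e : Fin g → Bool) :
    thetaChar (halfChar fun _ => false) (halfChar e) τ 0 = thetaHalf τ e := by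
  refine tsum_congr fun n => ?_
  have hzero : halfChar (fun _ : Fin g => false) = 0 := by ext; simp [halfChar]
  simp only [hzero, Pi.zero_apply, ofReal_zero, add_zero, zero_add, thetaTerm, Complex.exp_add]
  congr 1
  · simp [quadForm, dotProduct, mulVec, mul_sum, mul_assoc]
  · rw [mul_sum, Complex.exp_sum]
    exact prod_congr rfl fun i _ => cexp_two_pi_I_mul_halfChar (e i) (n i)

end SiegelTheta

theorem thetaNullwerte_max_ge_one_general (g : ℕ)
    (τ : Matrix (Fin g) (Fin g) ℂ)
    (hpos : (Matrix.of fun i j => (τ i j).im).PosDef) :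
    1 ≤ Finset.univ.sup' Finset.univ_nonempty
        fun p : (Fin g → Bool) × (Fin g → Bool) =>
          ‖thetaChar (halfChar p.1) (halfChar p.2) τ 0‖ := by
  obtain ⟨e, he⟩ := SiegelTheta.exists_one_le_norm_thetaHalf hpos
  rw [← SiegelTheta.thetaChar_zero_halfChar] at he
  exact he.trans (Finset.le_sup' (fun p : (Fin g → Bool) × (Fin g → Bool) =>
    ‖thetaChar (halfChar p.1) (halfChar p.2) τ 0‖) (Finset.mem_univ (fun _ => false, e)))

/-- For every `τ` in the Siegel upper half space,
`max_{(m₁,m₂)∈{0,1/2}^{2g}} |θ_{(m₁,m₂)}(τ,0)| ≥ 1`. -/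
theorem thetaNullwerte_max_ge_one (g : ℕ) (hg : 1 ≤ g)
    (τ : Matrix (Fin g) (Fin g) ℂ) (hsym : τ.IsSymm)
    (hpos : (Matrix.of fun i j => (τ i j).im).PosDef) :
    1 ≤ Finset.univ.sup' Finset.univ_nonempty
        fun p : (Fin g → Bool) × (Fin g → Bool) =>
          ‖thetaChar (halfChar p.1) (halfChar p.2) τ 0‖ :=
  thetaNullwerte_max_ge_one_general g τ hpos
end

section
/- Let r ≥ 2 be an even integer, τ ∈ 𝔖_g with Y = Im(τ), and let (m₁,m₂) and (m₁′,m₂′) be two distinct pairs of characteristics with m₁, m₂, m₁′, m₂′ ∈ {0, 1/r, …, (r−1)/r}^g. Then the functions z ↦ θ_{(m₁,m₂)}(τ, rz) and z ↦ θ_{(m₁′,m₂′)}(τ, rz) are orthogonal in L² for the hermitian metric of level r²: the integral over (a,b) ∈ [0,1)^{2g} of θ_{(m₁,m₂)}(τ, r(a+τb)) · conj(θ_{(m₁′,m₂′)}(τ, r(a+τb))) · exp(−2π r² bᵀY b) (with respect to Lebesgue measure da db) equals 0. -/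
/-- The imaginary part `Y = Im τ` of a complex matrix. -/
noncomputable def imMat {g : ℕ} (τ : Matrix (Fin g) (Fin g) ℂ) :
    Matrix (Fin g) (Fin g) ℝ :=
  Matrix.of fun i j => (τ i j).im

/-- The point `a + τ b ∈ ℂ^g` attached to real parameters `(a,b) ∈ ℝ^g × ℝ^g`. -/
noncomputable def torusPoint {g : ℕ} (τ : Matrix (Fin g) (Fin g) ℂ)
    (a b : Fin g → ℝ) : Fin g → ℂ :=
  fun i => (a i : ℂ) + ∑ j, τ i j * (b j : ℂ)

/-!
Translating `(a, b)` by `(eⱼ / r, 0)`, resp. `(0, eⱼ / r)`, multiplies the integrand by the phase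
`exp(2πi (m₁ⱼ - m₁'ⱼ))`, resp. `exp(2πi (m₂'ⱼ - m₂ⱼ))`: this is the quasi-periodicity of theta
functions, the level `r²` weight absorbing the automorphy factor of a `τ`-translation. Since `r m`
is integral for every characteristic, integer translations leave the integrand invariant, so its
integral over the unit cube, a fundamental domain of `ℤ^{2g}`, is invariant under every translation.
Distinct characteristics differ in some coordinate by a nonzero number in `(-1, 1)`, for which the
phase is not `1`; hence the integral vanishes.
-/

open Complex Matrix MeasureTheory Pointwise
open scoped Real ComplexConjugate

namespace Matrix

variable {n R : Type*} [Fintype n]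

lemma sum_sum_mul_mul_eq_dotProduct_mulVec [CommSemiring R] (A : Matrix n n R) (x y : n → R) :
    ∑ i, ∑ j, x i * A i j * y j = x ⬝ᵥ A *ᵥ y := by
  rw [dot_mulVec_eq_sum_sum, Finset.sum_comm]

lemma IsSymm.dotProduct_mulVec_comm [CommSemiring R] {A : Matrix n n R} (hA : A.IsSymm)
    (x y : n → R) : x ⬝ᵥ A *ᵥ y = y ⬝ᵥ A *ᵥ x := by
  rw [dotProduct_mulVec, dotProduct_comm, ← mulVec_transpose, hA.eq]

lemma IsSymm.sub_dotProduct_mulVec_sub [CommRing R] {A : Matrix n n R} (hA : A.IsSymm)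
    (x k u : n → R) :
    (x - k) ⬝ᵥ A *ᵥ (x - k) + 2 * ((x - k) ⬝ᵥ (u + A *ᵥ k)) =
      x ⬝ᵥ A *ᵥ x + 2 * (x ⬝ᵥ u) - (k ⬝ᵥ A *ᵥ k + 2 * (k ⬝ᵥ u)) := by
  simp only [sub_dotProduct, dotProduct_sub, dotProduct_add, mulVec_sub]
  rw [hA.dotProduct_mulVec_comm k x]
  ring

lemma IsSymm.add_dotProduct_mulVec_add [CommSemiring R] {A : Matrix n n R} (hA : A.IsSymm)
    (x y : n → R) :
    (x + y) ⬝ᵥ A *ᵥ (x + y) = x ⬝ᵥ A *ᵥ x + 2 * (y ⬝ᵥ A *ᵥ x) + y ⬝ᵥ A *ᵥ y := by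
  simp only [add_dotProduct, dotProduct_add, mulVec_add]
  rw [hA.dotProduct_mulVec_comm x y]
  ring

end Matrix

lemma conj_eq_sub_two_mul_im_mul_I (z : ℂ) : conj z = z - 2 * z.im * I := by
  have h := sub_conj z
  push_cast at h
  linear_combination -h

lemma cexp_two_pi_I_mul_sub_ne_one {x y : ℝ} (hx : x ∈ Set.Ico 0 1) (hy : y ∈ Set.Ico 0 1)
    (hxy : x ≠ y) : cexp (2 * π * I * (x - y : ℝ)) ≠ 1 := by
  rw [Ne, exp_eq_one_iff]
  rintro ⟨n, hn⟩
  have hn' : x - y = n := by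
    exact_mod_cast mul_left_cancel₀ two_pi_I_ne_zero (hn.trans (mul_comm _ _))
  have hlt : |(n : ℝ)| < 1 := by
    rw [← hn', abs_lt]
    constructor <;> linarith [hx.1, hx.2, hy.1, hy.2]
  have hn0 : n = 0 := Int.abs_lt_one_iff.mp (by exact_mod_cast hlt)
  exact hxy (by simpa [hn0, sub_eq_zero] using hn')

lemma dotProduct_intCast_comp_single {ι : Type*} [Fintype ι] [DecidableEq ι] (v : ι → ℝ) (j : ι)
    (n : ℤ) :
    v ⬝ᵥ (Int.cast ∘ Pi.single j n) = v j * n := by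
  simp [dotProduct, Pi.single_apply]

lemma cexp_two_pi_I_mul_intCast (n : ℤ) : cexp (2 * π * I * ((n : ℝ) : ℂ)) = 1 := by
  rw [ofReal_intCast, mul_comm]
  exact exp_int_mul_two_pi_mul_I n

lemma mul_single_eq_intCast_single {ι : Type*} [DecidableEq ι] {r : ℕ} {x : ℝ} {n : ℤ}
    (h : (r : ℝ) * x = n) (j i : ι) :
    (r : ℝ) * (Pi.single j x : ι → ℝ) i = (Pi.single j n : ι → ℤ) i := by
  rcases eq_or_ne i j with rfl | hij <;> simp [*]

section QuasiPeriodicity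

variable {g : ℕ} (m₁ m₂ : Fin g → ℝ) (τ : Matrix (Fin g) (Fin g) ℂ)

lemma thetaChar_eq_tsum (z : Fin g → ℂ) :
    thetaChar m₁ m₂ τ z = ∑' n : Fin g → ℤ,
      cexp (π * I * ((Int.cast ∘ n + ofReal ∘ m₁) ⬝ᵥ τ *ᵥ (Int.cast ∘ n + ofReal ∘ m₁)
        + 2 * ((Int.cast ∘ n + ofReal ∘ m₁) ⬝ᵥ (z + ofReal ∘ m₂)))) := by
  refine tsum_congr fun n => ?_
  rw [← sum_sum_mul_mul_eq_dotProduct_mulVec]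
  simp only [dotProduct, Pi.add_apply, Function.comp_apply]
  ring_nf

lemma thetaChar_add_intCast (z : Fin g → ℂ) (k : Fin g → ℤ) :
    thetaChar m₁ m₂ τ (z + Int.cast ∘ k) =
      cexp (2 * π * I * (m₁ ⬝ᵥ Int.cast ∘ k : ℝ)) * thetaChar m₁ m₂ τ z := by
  simp_rw [thetaChar_eq_tsum, ← tsum_mul_left, ← exp_add]
  refine tsum_congr fun n => ?_
  have hnk : (Int.cast ∘ n ⬝ᵥ Int.cast ∘ k : ℂ) = ((n ⬝ᵥ k : ℤ) : ℂ) := by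
    simp [dotProduct]
  have hmk : (ofReal ∘ m₁ ⬝ᵥ Int.cast ∘ k : ℂ) = ((m₁ ⬝ᵥ Int.cast ∘ k : ℝ) : ℂ) := by
    simp [dotProduct]
  rw [← mul_one (cexp (_ + _)), ← exp_int_mul_two_pi_mul_I (n ⬝ᵥ k), ← exp_add]
  congr 1
  simp only [dotProduct_add, add_dotProduct]
  linear_combination (2 * π * I) * (hnk + hmk)

noncomputable def thetaAutomorphyFactor (k z : Fin g → ℂ) : ℂ :=
  cexp (-(π * I * (k ⬝ᵥ τ *ᵥ k + 2 * (k ⬝ᵥ (z + ofReal ∘ m₂)))))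

lemma thetaChar_add_mulVec_intCast (hτ : τ.IsSymm) (z : Fin g → ℂ) (k : Fin g → ℤ) :
    thetaChar m₁ m₂ τ (z + τ *ᵥ Int.cast ∘ k) =
      thetaAutomorphyFactor m₂ τ (Int.cast ∘ k) z * thetaChar m₁ m₂ τ z := by
  rw [thetaChar_eq_tsum, thetaChar_eq_tsum, thetaAutomorphyFactor, ← (Equiv.subRight k).tsum_eq,
    ← tsum_mul_left]
  refine tsum_congr fun n => ?_
  have hsub : (Int.cast ∘ (n - k) + ofReal ∘ m₁ : Fin g → ℂ) =
      (Int.cast ∘ n + ofReal ∘ m₁) - Int.cast ∘ k := by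
    ext i
    simp only [Pi.add_apply, Pi.sub_apply, Function.comp_apply, Int.cast_sub]
    ring
  rw [Equiv.subRight_apply, hsub, ← exp_add, add_right_comm z]
  congr 1
  linear_combination (π * I) * hτ.sub_dotProduct_mulVec_sub (Int.cast ∘ n + ofReal ∘ m₁)
    (Int.cast ∘ k) (z + ofReal ∘ m₂)

end QuasiPeriodicity

namespace ZSpan

variable {ι ι' E E' : Type*} [NormedAddCommGroup E] [NormedSpace ℝ E]
  [NormedAddCommGroup E'] [NormedSpace ℝ E']

lemma fundamentalDomain_prod (b : Module.Basis ι ℝ E) (b' : Module.Basis ι' ℝ E') :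
    fundamentalDomain (b.prod b') = fundamentalDomain b ×ˢ fundamentalDomain b' := by
  ext x
  simp [mem_fundamentalDomain, Sum.forall]

variable [Finite ι] [MeasurableSpace E] [BorelSpace E] (b : Module.Basis ι ℝ E)
  (μ : Measure E) [μ.IsAddLeftInvariant]

lemma setIntegral_fundamentalDomain_add {F : Type*} [NormedAddCommGroup F] [NormedSpace ℝ F]
    {f : E → F} (hf : ∀ i, Function.Periodic f (b i)) (v : E) :
    ∫ x in fundamentalDomain b, f (x + v) ∂μ = ∫ x in fundamentalDomain b, f x ∂μ := by
  have hD := ZSpan.isAddFundamentalDomain' b μ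
  have : Countable (Submodule.span ℤ (Set.range b)).toAddSubgroup :=
    inferInstanceAs (Countable (Submodule.span ℤ (Set.range b)))
  have hper : ∀ γ ∈ Submodule.span ℤ (Set.range b), Function.Periodic f γ := by
    intro γ hγ
    induction hγ using Submodule.span_induction with
    | mem _ h => obtain ⟨i, rfl⟩ := h; exact hf i
    | zero => exact fun x => by rw [add_zero]
    | add _ _ _ _ h₁ h₂ => exact h₁.add_period h₂
    | smul n _ _ h => exact h.zsmul n
  have hinv : ∀ (γ : (Submodule.span ℤ (Set.range b)).toAddSubgroup) x, f (γ +ᵥ x) = f x :=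
    fun γ x => (congrArg f (add_comm (γ : E) x)).trans (hper γ γ.2 x)
  calc ∫ x in fundamentalDomain b, f (x + v) ∂μ
      = ∫ x in v +ᵥ fundamentalDomain b, f x ∂μ := by
        rw [← (measurePreserving_add_right μ v).setIntegral_image_emb
          (MeasurableEquiv.addRight v).measurableEmbedding f]
        rw [← Set.image_vadd, show (· + v) = (v +ᵥ ·) from funext fun x => add_comm x v]
    _ = ∫ x in fundamentalDomain b, f x ∂μ := (hD.vadd_of_comm v).setIntegral_eq hD hinv

lemma setIntegral_fundamentalDomain_eq_zero {F : Type*} [NormedAddCommGroup F] [NormedSpace ℂ F]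
    {f : E → F} (hf : ∀ i, Function.Periodic f (b i)) {v : E} {c : ℂ} (hc : c ≠ 1)
    (hv : ∀ x, f (x + v) = c • f x) :
    ∫ x in fundamentalDomain b, f x ∂μ = 0 := by
  have h := setIntegral_fundamentalDomain_add b μ hf v
  simp_rw [hv, integral_smul] at h
  have : (c - 1) • ∫ x in fundamentalDomain b, f x ∂μ = 0 := by rw [sub_smul, h, one_smul, sub_self]
  exact (smul_eq_zero.mp this).resolve_left (sub_ne_zero.mpr hc)

end ZSpan

lemma imMat_isSymm {g : ℕ} {τ : Matrix (Fin g) (Fin g) ℂ} (hτ : τ.IsSymm) : (imMat τ).IsSymm :=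
  hτ.map im

section Integrand

variable {g : ℕ} (r : ℕ) (τ : Matrix (Fin g) (Fin g) ℂ) (m₁ m₂ m₁' m₂' : Fin g → ℝ)

noncomputable def thetaInnerIntegrand (p : (Fin g → ℝ) × (Fin g → ℝ)) : ℂ :=
  thetaChar m₁ m₂ τ (fun i => (r : ℂ) * torusPoint τ p.1 p.2 i)
    * (starRingEnd ℂ) (thetaChar m₁' m₂' τ (fun i => (r : ℂ) * torusPoint τ p.1 p.2 i))
    * (Real.exp (-2 * Real.pi * (r : ℝ) ^ 2 * ∑ i, ∑ j, p.2 i * imMat τ i j * p.2 j) : ℂ)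

lemma torusPoint_eq (a b : Fin g → ℝ) : torusPoint τ a b = ofReal ∘ a + τ *ᵥ ofReal ∘ b := rfl

lemma torusPoint_add_snd (a b d : Fin g → ℝ) :
    torusPoint τ a (b + d) = torusPoint τ a b + τ *ᵥ ofReal ∘ d := by
  rw [torusPoint_eq, torusPoint_eq, add_assoc, ← mulVec_add]
  congr 2
  ext i
  simp

lemma im_ofReal_dotProduct_mulVec_ofReal (x y : Fin g → ℝ) :
    (ofReal ∘ x ⬝ᵥ τ *ᵥ ofReal ∘ y).im = x ⬝ᵥ imMat τ *ᵥ y := by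
  simp [dotProduct, mulVec, imMat, Complex.im_sum, Finset.mul_sum, mul_left_comm]

lemma im_ofReal_dotProduct_torusPoint (x a b : Fin g → ℝ) :
    (ofReal ∘ x ⬝ᵥ torusPoint τ a b).im = x ⬝ᵥ imMat τ *ᵥ b := by
  rw [torusPoint_eq, dotProduct_add, add_im, im_ofReal_dotProduct_mulVec_ofReal]
  simp [dotProduct, Complex.im_sum]

lemma thetaInnerIntegrand_add_fst (a b c : Fin g → ℝ) (k : Fin g → ℤ)
    (hc : ∀ i, (r : ℝ) * c i = k i) :
    thetaInnerIntegrand r τ m₁ m₂ m₁' m₂' (a + c, b) =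
      cexp (2 * π * I * ((m₁ - m₁') ⬝ᵥ Int.cast ∘ k : ℝ)) *
        thetaInnerIntegrand r τ m₁ m₂ m₁' m₂' (a, b) := by
  have hw : (fun i => (r : ℂ) * torusPoint τ (a + c) b i) =
      (fun i => (r : ℂ) * torusPoint τ a b i) + Int.cast ∘ k := by
    ext i
    have hci : (r : ℂ) * c i = k i := by exact_mod_cast hc i
    simp only [torusPoint, Pi.add_apply, ofReal_add, Function.comp_apply, ← hci]
    ring
  have hphase : cexp (2 * π * I * (m₁ ⬝ᵥ Int.cast ∘ k : ℝ)) *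
      cexp (conj (2 * π * I * (m₁' ⬝ᵥ Int.cast ∘ k : ℝ))) =
        cexp (2 * π * I * ((m₁ - m₁') ⬝ᵥ Int.cast ∘ k : ℝ)) := by
    rw [← exp_add]
    simp only [map_mul, conj_ofReal, conj_I, map_ofNat, sub_dotProduct, ofReal_sub]
    ring_nf
  simp only [thetaInnerIntegrand, hw, thetaChar_add_intCast]
  rw [map_mul, ← Complex.exp_conj]
  linear_combination thetaChar m₁ m₂ τ (fun i => (r : ℂ) * torusPoint τ a b i) *
    conj (thetaChar m₁' m₂' τ (fun i => (r : ℂ) * torusPoint τ a b i)) *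
    (Real.exp (-2 * Real.pi * (r : ℝ) ^ 2 * ∑ i, ∑ j, b i * imMat τ i j * b j) : ℂ) * hphase

lemma intCast_comp_eq_smul_ofReal_comp {d : Fin g → ℝ} {k : Fin g → ℤ}
    (hd : ∀ i, (r : ℝ) * d i = k i) : (Int.cast ∘ k : Fin g → ℂ) = (r : ℂ) • ofReal ∘ d := by
  ext i
  simp only [Function.comp_apply, Pi.smul_apply, smul_eq_mul]
  exact_mod_cast (hd i).symm

/-- With `w = r • torusPoint τ a b`, the two factors contribute
`exp (2π Im (k ⬝ᵥ τ *ᵥ k) + 4π Im (k ⬝ᵥ w))`; since `k = r d` and `Im w = r (Y b)`, this is exactly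
what the change of the weight cancels. -/
lemma thetaAutomorphyFactor_mul_conj_mul_rexp (a b d : Fin g → ℝ) (k : Fin g → ℤ)
    (hd : ∀ i, (r : ℝ) * d i = k i) :
    thetaAutomorphyFactor m₂ τ (Int.cast ∘ k) ((r : ℂ) • torusPoint τ a b) *
      conj (thetaAutomorphyFactor m₂' τ (Int.cast ∘ k) ((r : ℂ) • torusPoint τ a b)) *
      (rexp (-2 * π * r ^ 2 * (2 * (d ⬝ᵥ imMat τ *ᵥ b) + d ⬝ᵥ imMat τ *ᵥ d)) : ℂ) =
        cexp (2 * π * I * ((m₂' - m₂) ⬝ᵥ Int.cast ∘ k : ℝ)) := by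
  set w : Fin g → ℂ := (r : ℂ) • torusPoint τ a b with hw
  set kc : Fin g → ℂ := Int.cast ∘ k
  have hk : kc = (r : ℂ) • ofReal ∘ d := intCast_comp_eq_smul_ofReal_comp r hd
  have hq : (kc ⬝ᵥ τ *ᵥ kc).im = r ^ 2 * (d ⬝ᵥ imMat τ *ᵥ d) := by
    simp only [hk, mulVec_smul, dotProduct_smul, smul_dotProduct, smul_eq_mul, mul_im,
      natCast_re, natCast_im, im_ofReal_dotProduct_mulVec_ofReal, zero_mul, add_zero]
    ring
  have hs : (kc ⬝ᵥ w).im = r ^ 2 * (d ⬝ᵥ imMat τ *ᵥ b) := by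
    simp only [hk, hw, dotProduct_smul, smul_dotProduct, smul_eq_mul, mul_im,
      natCast_re, natCast_im, im_ofReal_dotProduct_torusPoint, zero_mul, add_zero]
    ring
  have hμ : ∀ m : Fin g → ℝ, kc ⬝ᵥ ofReal ∘ m = ((m ⬝ᵥ Int.cast ∘ k : ℝ) : ℂ) := by
    intro m
    simp [kc, dotProduct, mul_comm]
  rw [thetaAutomorphyFactor, thetaAutomorphyFactor, ← Complex.exp_conj, ofReal_exp, ← exp_add,
    ← exp_add, dotProduct_add, dotProduct_add, hμ, hμ]
  congr 1
  simp only [map_neg, map_mul, map_add, conj_I, conj_ofReal, map_ofNat]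
  rw [conj_eq_sub_two_mul_im_mul_I, conj_eq_sub_two_mul_im_mul_I (kc ⬝ᵥ w), hq, hs,
    sub_dotProduct]
  push_cast
  linear_combination (-(2 * π * r ^ 2 * ((d ⬝ᵥ imMat τ *ᵥ d : ℝ) : ℂ))
    - 4 * π * r ^ 2 * ((d ⬝ᵥ imMat τ *ᵥ b : ℝ) : ℂ)) * I_sq

lemma thetaInnerIntegrand_add_snd (hτ : τ.IsSymm) (a b d : Fin g → ℝ) (k : Fin g → ℤ)
    (hd : ∀ i, (r : ℝ) * d i = k i) :
    thetaInnerIntegrand r τ m₁ m₂ m₁' m₂' (a, b + d) =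
      cexp (2 * π * I * ((m₂' - m₂) ⬝ᵥ Int.cast ∘ k : ℝ)) *
        thetaInnerIntegrand r τ m₁ m₂ m₁' m₂' (a, b) := by
  set w : Fin g → ℂ := (r : ℂ) • torusPoint τ a b with hw_def
  have hw : (fun i => (r : ℂ) * torusPoint τ a (b + d) i) = w + τ *ᵥ Int.cast ∘ k := by
    rw [intCast_comp_eq_smul_ofReal_comp r hd, mulVec_smul, hw_def, ← smul_add,
      ← torusPoint_add_snd]
    rfl
  have hweight : -2 * π * (r : ℝ) ^ 2 * ∑ i, ∑ j, (b + d) i * imMat τ i j * (b + d) j =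
      -2 * π * r ^ 2 * ∑ i, ∑ j, b i * imMat τ i j * b j +
        -2 * π * r ^ 2 * (2 * (d ⬝ᵥ imMat τ *ᵥ b) + d ⬝ᵥ imMat τ *ᵥ d) := by
    simp only [sum_sum_mul_mul_eq_dotProduct_mulVec, (imMat_isSymm hτ).add_dotProduct_mulVec_add]
    ring
  have hw₀ : (fun i => (r : ℂ) * torusPoint τ a b i) = w := rfl
  simp only [thetaInnerIntegrand]
  rw [hw, hw₀, thetaChar_add_mulVec_intCast m₁ m₂ τ hτ, thetaChar_add_mulVec_intCast m₁' m₂' τ hτ,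
    hweight, Real.exp_add, ofReal_mul, map_mul]
  linear_combination thetaChar m₁ m₂ τ w * conj (thetaChar m₁' m₂' τ w) *
    (rexp (-2 * π * r ^ 2 * ∑ i, ∑ j, b i * imMat τ i j * b j) : ℂ) *
    thetaAutomorphyFactor_mul_conj_mul_rexp r τ m₂ m₂' a b d k hd

end Integrand

section Characteristics

variable {r : ℕ} {x : ℝ}

lemma ne_zero_of_exists_eq_div (hx : ∃ k : ℕ, k < r ∧ x = k / r) : r ≠ 0 := by
  obtain ⟨k, hk, -⟩ := hx
  omega

lemma mem_Ico_of_exists_eq_div (hx : ∃ k : ℕ, k < r ∧ x = k / r) : x ∈ Set.Ico 0 1 := by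
  obtain ⟨k, hk, rfl⟩ := hx
  have hr : (0 : ℝ) < r := by exact_mod_cast k.zero_le.trans_lt hk
  exact ⟨by positivity, (div_lt_one hr).mpr (by exact_mod_cast hk)⟩

lemma exists_mul_sub_eq_intCast {y : ℝ} (hx : ∃ k : ℕ, k < r ∧ x = k / r)
    (hy : ∃ k : ℕ, k < r ∧ y = k / r) : ∃ n : ℤ, (r : ℝ) * (x - y) = n := by
  obtain ⟨k, hk, rfl⟩ := hx
  obtain ⟨l, -, rfl⟩ := hy
  have hr : (r : ℝ) ≠ 0 := by exact_mod_cast (k.zero_le.trans_lt hk).ne'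
  exact ⟨k - l, by push_cast; field_simp⟩

end Characteristics

section Orthogonality

variable {g r : ℕ} {τ : Matrix (Fin g) (Fin g) ℂ} {m₁ m₂ m₁' m₂' : Fin g → ℝ}

lemma thetaInnerIntegrand_periodic (hτ : τ.IsSymm)
    (h₁ : ∀ i, ∃ n : ℤ, (r : ℝ) * (m₁ i - m₁' i) = n)
    (h₂ : ∀ i, ∃ n : ℤ, (r : ℝ) * (m₂' i - m₂ i) = n) (i : Fin g ⊕ Fin g) :
    Function.Periodic (thetaInnerIntegrand r τ m₁ m₂ m₁' m₂')
      ((Pi.basisFun ℝ (Fin g)).prod (Pi.basisFun ℝ (Fin g)) i) := by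
  have hr : (r : ℝ) * 1 = (r : ℤ) := by simp
  rcases i with j | j <;> rintro ⟨a, b⟩ <;> simp only [Module.Basis.prod_apply, Sum.elim_inl,
    Sum.elim_inr, Function.comp_apply, LinearMap.inl_apply, LinearMap.inr_apply,
    Pi.basisFun_apply, Prod.mk_add_mk, add_zero]
  · rw [thetaInnerIntegrand_add_fst r τ _ _ _ _ a b _ _ (mul_single_eq_intCast_single hr j),
      dotProduct_intCast_comp_single, Pi.sub_apply, Int.cast_natCast, mul_comm (m₁ j - _)]
    obtain ⟨n, hn⟩ := h₁ j
    rw [hn, cexp_two_pi_I_mul_intCast, one_mul]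
  · rw [thetaInnerIntegrand_add_snd r τ _ _ _ _ hτ a b _ _ (mul_single_eq_intCast_single hr j),
      dotProduct_intCast_comp_single, Pi.sub_apply, Int.cast_natCast, mul_comm (m₂' j - _)]
    obtain ⟨n, hn⟩ := h₂ j
    rw [hn, cexp_two_pi_I_mul_intCast, one_mul]

lemma exists_thetaInnerIntegrand_add_eq_smul (hτ : τ.IsSymm)
    (hm₁ : ∀ i, ∃ k : ℕ, k < r ∧ m₁ i = (k : ℝ) / r)
    (hm₂ : ∀ i, ∃ k : ℕ, k < r ∧ m₂ i = (k : ℝ) / r)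
    (hm₁' : ∀ i, ∃ k : ℕ, k < r ∧ m₁' i = (k : ℝ) / r)
    (hm₂' : ∀ i, ∃ k : ℕ, k < r ∧ m₂' i = (k : ℝ) / r)
    (hne : (m₁, m₂) ≠ (m₁', m₂')) :
    ∃ (v : (Fin g → ℝ) × (Fin g → ℝ)) (c : ℂ), c ≠ 1 ∧
      ∀ p, thetaInnerIntegrand r τ m₁ m₂ m₁' m₂' (p + v) =
        c • thetaInnerIntegrand r τ m₁ m₂ m₁' m₂' p := by
  by_cases h₁ : m₁ = m₁'
  · have h₂ : m₂ ≠ m₂' := fun h₂ => hne (by rw [h₁, h₂])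
    obtain ⟨j, hj⟩ := Function.ne_iff.mp h₂
    have hr : (r : ℝ) * (r : ℝ)⁻¹ = (1 : ℤ) := by
      simp [ne_zero_of_exists_eq_div (hm₂ j)]
    refine ⟨(0, Pi.single j (r : ℝ)⁻¹), cexp (2 * π * I * (m₂' j - m₂ j : ℝ)),
      cexp_two_pi_I_mul_sub_ne_one (mem_Ico_of_exists_eq_div (hm₂' j))
        (mem_Ico_of_exists_eq_div (hm₂ j)) (Ne.symm hj), ?_⟩
    rintro ⟨a, b⟩
    rw [Prod.mk_add_mk, add_zero, smul_eq_mul,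
      thetaInnerIntegrand_add_snd r τ _ _ _ _ hτ a b _ _ (mul_single_eq_intCast_single hr j),
      dotProduct_intCast_comp_single, Int.cast_one, mul_one, Pi.sub_apply]
  · obtain ⟨j, hj⟩ := Function.ne_iff.mp h₁
    have hr : (r : ℝ) * (r : ℝ)⁻¹ = (1 : ℤ) := by
      simp [ne_zero_of_exists_eq_div (hm₁ j)]
    refine ⟨(Pi.single j (r : ℝ)⁻¹, 0), cexp (2 * π * I * (m₁ j - m₁' j : ℝ)),
      cexp_two_pi_I_mul_sub_ne_one (mem_Ico_of_exists_eq_div (hm₁ j))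
        (mem_Ico_of_exists_eq_div (hm₁' j)) hj, ?_⟩
    rintro ⟨a, b⟩
    rw [Prod.mk_add_mk, add_zero, smul_eq_mul,
      thetaInnerIntegrand_add_fst r τ _ _ _ _ a b _ _ (mul_single_eq_intCast_single hr j),
      dotProduct_intCast_comp_single, Int.cast_one, mul_one, Pi.sub_apply]

end Orthogonality

theorem thetaChar_orthogonal_general (g r : ℕ)
    (τ : Matrix (Fin g) (Fin g) ℂ) (hsym : τ.IsSymm)
    (m₁ m₂ m₁' m₂' : Fin g → ℝ)
    (hm₁ : ∀ i, ∃ k : ℕ, k < r ∧ m₁ i = (k : ℝ) / r)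
    (hm₂ : ∀ i, ∃ k : ℕ, k < r ∧ m₂ i = (k : ℝ) / r)
    (hm₁' : ∀ i, ∃ k : ℕ, k < r ∧ m₁' i = (k : ℝ) / r)
    (hm₂' : ∀ i, ∃ k : ℕ, k < r ∧ m₂' i = (k : ℝ) / r)
    (hne : (m₁, m₂) ≠ (m₁', m₂')) :
    (∫ p : (Fin g → ℝ) × (Fin g → ℝ) in
        (Set.univ.pi fun _ : Fin g => Set.Ico (0 : ℝ) 1) ×ˢ
          (Set.univ.pi fun _ : Fin g => Set.Ico (0 : ℝ) 1),
        thetaChar m₁ m₂ τ (fun i => (r : ℂ) * torusPoint τ p.1 p.2 i)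
          * (starRingEnd ℂ)
              (thetaChar m₁' m₂' τ (fun i => (r : ℂ) * torusPoint τ p.1 p.2 i))
          * (Real.exp (-2 * Real.pi * (r : ℝ)^2
              * ∑ i, ∑ j, p.2 i * imMat τ i j * p.2 j) : ℂ)) = 0 := by
  have hper := thetaInnerIntegrand_periodic (r := r) hsym
    (fun i => exists_mul_sub_eq_intCast (hm₁ i) (hm₁' i))
    (fun i => exists_mul_sub_eq_intCast (hm₂' i) (hm₂ i))
  obtain ⟨v, c, hc, hv⟩ := exists_thetaInnerIntegrand_add_eq_smul hsym hm₁ hm₂ hm₁' hm₂' hne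
  rw [Measure.volume_eq_prod, ← ZSpan.fundamentalDomain_pi_basisFun,
    ← ZSpan.fundamentalDomain_prod]
  exact ZSpan.setIntegral_fundamentalDomain_eq_zero _ _ hper hc hv

/-- Orthogonality of the theta functions with level `r` characteristics:
for two distinct pairs of characteristics `(m₁,m₂) ≠ (m₁′,m₂′)` in
`{0, 1/r, …, (r−1)/r}^g`, the functions `z ↦ θ_{(m₁,m₂)}(τ, rz)` and
`z ↦ θ_{(m₁′,m₂′)}(τ, rz)` are orthogonal in `L²` for the hermitian metric of
level `r²` on the torus `ℂ^g/(ℤ^g + τℤ^g)`. -/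
theorem thetaChar_orthogonal (g r : ℕ) (hg : 1 ≤ g) (hr : 2 ≤ r) (hre : Even r)
    (τ : Matrix (Fin g) (Fin g) ℂ) (hsym : τ.IsSymm)
    (hpos : (imMat τ).PosDef)
    (m₁ m₂ m₁' m₂' : Fin g → ℝ)
    (hm₁ : ∀ i, ∃ k : ℕ, k < r ∧ m₁ i = (k : ℝ) / r)
    (hm₂ : ∀ i, ∃ k : ℕ, k < r ∧ m₂ i = (k : ℝ) / r)
    (hm₁' : ∀ i, ∃ k : ℕ, k < r ∧ m₁' i = (k : ℝ) / r)
    (hm₂' : ∀ i, ∃ k : ℕ, k < r ∧ m₂' i = (k : ℝ) / r)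
    (hne : (m₁, m₂) ≠ (m₁', m₂')) :
    (∫ p : (Fin g → ℝ) × (Fin g → ℝ) in
        (Set.univ.pi fun _ : Fin g => Set.Ico (0 : ℝ) 1) ×ˢ
          (Set.univ.pi fun _ : Fin g => Set.Ico (0 : ℝ) 1),
        thetaChar m₁ m₂ τ (fun i => (r : ℂ) * torusPoint τ p.1 p.2 i)
          * (starRingEnd ℂ)
              (thetaChar m₁' m₂' τ (fun i => (r : ℂ) * torusPoint τ p.1 p.2 i))
          * (Real.exp (-2 * Real.pi * (r : ℝ)^2
              * ∑ i, ∑ j, p.2 i * imMat τ i j * p.2 j) : ℂ)) = 0 :=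
  thetaChar_orthogonal_general g r τ hsym m₁ m₂ m₁' m₂' hm₁ hm₂ hm₁' hm₂' hne
end

section
/- Let a ≥ 1 and b ≥ 1 be real numbers, and suppose there exists a real number c ≥ 2 such that |a − b| ≤ c·log(2 + a). Then |a − b| ≤ c̃·log(2 + min{a,b}), where c̃ = c·log(6 + 2c·log(2c) − 2c)/log(3). -/
/-!
If `b ≤ a`, the tangent line of `log` at `2c` turns `a - b ≤ c log (2 + a)` into the linear bound
`2 + a ≤ M (2 + b) / 3` with `M = 6 + 2c log (2c) - 2c ≥ 6`, so that
`log (2 + a) ≤ log M + log (2 + b) - log 3 ≤ (log M / log 3) log (2 + b)`, the last step because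
`log M` and `log (2 + b)` are both at least `log 3`. If `a ≤ b` there is nothing to do, since
`log M / log 3 ≥ 1`.
-/

open Real

theorem Real.log_le_div_add_log_sub_one {x t : ℝ} (hx : 0 < x) (ht : 0 < t) :
    log x ≤ x / t + log t - 1 := by
  have h := log_le_sub_one_of_pos (div_pos hx ht)
  rw [log_div hx.ne' ht.ne'] at h
  linarith

theorem Real.le_mul_log_of_exp_one_le {x : ℝ} (hx : exp 1 ≤ x) : x ≤ x * log x := by
  have hx0 : 0 < x := (exp_pos 1).trans_le hx
  exact le_mul_of_one_le_right hx0.le ((le_log_iff_exp_le hx0).2 hx)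

theorem add_sub_le_div_mul {L x y : ℝ} (hL : 0 < L) (hx : L ≤ x) (hy : L ≤ y) :
    x + y - L ≤ x / L * y := by
  rw [div_mul_eq_mul_div, le_div_iff₀ hL]
  nlinarith [mul_nonneg (sub_nonneg.2 hx) (sub_nonneg.2 hy)]

theorem six_le_six_add_two_mul_log_sub {c : ℝ} (hc : 2 ≤ c) :
    6 ≤ 6 + 2 * c * log (2 * c) - 2 * c := by
  have := le_mul_log_of_exp_one_le (x := 2 * c) (by linarith [exp_one_lt_d9])
  linarith

theorem two_add_le_of_sub_le_mul_log {a b c : ℝ} (hc : 0 < c) (ha : 0 < 2 + a)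
    (h : a - b ≤ c * log (2 + a)) :
    2 + a ≤ 2 * b - 2 + (6 + 2 * c * log (2 * c) - 2 * c) := by
  have htangent : c * log (2 + a) ≤ (2 + a) / 2 + c * log (2 * c) - c :=
    calc c * log (2 + a) ≤ c * ((2 + a) / (2 * c) + log (2 * c) - 1) := by
          gcongr; exact log_le_div_add_log_sub_one ha (by positivity)
      _ = (2 + a) / 2 + c * log (2 * c) - c := by field_simp
  linarith

theorem log_two_add_le_of_sub_le_mul_log {a b c : ℝ} (hb : 1 ≤ b) (hc : 2 ≤ c) (hba : b ≤ a)
    (h : a - b ≤ c * log (2 + a)) :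
    log (2 + a) ≤ log (6 + 2 * c * log (2 * c) - 2 * c) + log (2 + b) - log 3 := by
  set M := 6 + 2 * c * log (2 * c) - 2 * c
  have hM : 6 ≤ M := six_le_six_add_two_mul_log_sub hc
  have hlin : 2 + a ≤ M * (2 + b) / 3 := by
    have := two_add_le_of_sub_le_mul_log (by linarith) (by linarith) h
    nlinarith
  calc log (2 + a) ≤ log (M * (2 + b) / 3) := log_le_log (by linarith) hlin
    _ = log M + log (2 + b) - log 3 := by
      rw [log_div (by positivity) (by norm_num), log_mul (by positivity) (by positivity)]

theorem abs_sub_le_log_min_general (a b c : ℝ) (hb : 1 ≤ b) (hc : 2 ≤ c)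
    (h : |a - b| ≤ c * Real.log (2 + a)) :
    |a - b| ≤ (c * Real.log (6 + 2 * c * Real.log (2 * c) - 2 * c) / Real.log 3)
      * Real.log (2 + min a b) := by
  set M := 6 + 2 * c * log (2 * c) - 2 * c
  have hlog3 : 0 < log 3 := log_pos (by norm_num)
  have hlogM : log 3 ≤ log M :=
    log_le_log (by norm_num) (by linarith [six_le_six_add_two_mul_log_sub hc])
  rw [mul_div_assoc, mul_comm c, mul_assoc]
  rcases le_total a b with hab | hba
  · rw [min_eq_left hab]
    exact h.trans (le_mul_of_one_le_left ((abs_nonneg _).trans h) ((one_le_div hlog3).2 hlogM))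
  · rw [min_eq_right hba]
    rw [abs_of_nonneg (sub_nonneg.2 hba)] at h ⊢
    calc a - b ≤ c * log (2 + a) := h
      _ ≤ c * (log M + log (2 + b) - log 3) := by
        gcongr; exact log_two_add_le_of_sub_le_mul_log hb hc hba h
      _ ≤ c * (log M / log 3 * log (2 + b)) := by
        gcongr; exact add_sub_le_div_mul hlog3 hlogM (log_le_log (by norm_num) (by linarith))
      _ = log M / log 3 * (c * log (2 + b)) := by ring

/-- If `a, b ≥ 1` and `|a − b| ≤ c·log(2 + a)` for some `c ≥ 2`, then
`|a − b| ≤ c̃·log(2 + min{a,b})` with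
`c̃ = c·log(6 + 2c·log(2c) − 2c)/log 3`. -/
theorem abs_sub_le_log_min (a b c : ℝ) (ha : 1 ≤ a) (hb : 1 ≤ b) (hc : 2 ≤ c)
    (h : |a - b| ≤ c * Real.log (2 + a)) :
    |a - b| ≤ (c * Real.log (6 + 2 * c * Real.log (2 * c) - 2 * c) / Real.log 3)
      * Real.log (2 + min a b) :=
  abs_sub_le_log_min_general a b c hb hc h
end

section
/- Let K be a number field with ring of integers O_K, V a finite-dimensional K-vector space, and R(V) the set of finitely generated O_K-submodules of V spanning V over K. Then the function δ defined by δ(𝒱₁,𝒱₂) = (1/[K:ℚ]) · log Card((𝒱₁+𝒱₂)/(𝒱₁∩𝒱₂)) is a distance on R(V): δ(𝒱₁,𝒱₂) ≥ 0 with δ(𝒱₁,𝒱₂) = 0 if and only if 𝒱₁ = 𝒱₂, δ(𝒱₁,𝒱₂) = δ(𝒱₂,𝒱₁), and δ(𝒱₁,𝒱₃) ≤ δ(𝒱₁,𝒱₂) + δ(𝒱₂,𝒱₃) for all 𝒱₁, 𝒱₂, 𝒱₃ ∈ R(V). -/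
open NumberField

/-- The quotient module `(𝒱₁ + 𝒱₂)/(𝒱₁ ∩ 𝒱₂)` attached to two submodules. -/
abbrev latticeQuot {R M : Type*} [CommRing R] [AddCommGroup M] [Module R M]
    (V₁ V₂ : Submodule R M) :=
  (V₁ ⊔ V₂ : Submodule R M) ⧸ ((V₁ ⊓ V₂).comap (V₁ ⊔ V₂).subtype)

/-- The distance `δ(𝒱₁,𝒱₂) = (1/[K:ℚ]) log Card((𝒱₁+𝒱₂)/(𝒱₁∩𝒱₂))` between
two `𝓞 K`-lattices in a `K`-vector space `V`. -/
noncomputable def latticeDelta (K : Type*) [Field K] [NumberField K]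
    {V : Type*} [AddCommGroup V] [Module K V]
    [Module (𝓞 K) V] [IsScalarTower (𝓞 K) K V]
    (V₁ V₂ : Submodule (𝓞 K) V) : ℝ :=
  (1 / (Module.finrank ℚ K : ℝ)) * Real.log (Nat.card (latticeQuot V₁ V₂))

/-- `𝒱` is a lattice in the `K`-vector space `V`: a finitely generated
`𝓞 K`-submodule spanning `V` over `K`. -/
def IsLattice (K : Type*) [Field K] [NumberField K]
    {V : Type*} [AddCommGroup V] [Module K V]
    [Module (𝓞 K) V] [IsScalarTower (𝓞 K) K V]
    (W : Submodule (𝓞 K) V) : Prop :=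
  W.FG ∧ Submodule.span K (W : Set V) = ⊤

open scoped nonZeroDivisors

/-!
Write `N(A, B) = Card((A + B)/(A ∩ B))`. Since `(A + B)/A ≅ B/(A ∩ B)`, we have
`N(A, B) = [A : A ∩ B]·[B : A ∩ B]`, which is symmetric, equals `1` exactly when `A = B`, and
satisfies `N(A, C) ≤ N(A, B)·N(B, C)` by the submultiplicativity
`[H : H ∩ L] ≤ [H : H ∩ K]·[K : K ∩ L]` of relative indices; taking logarithms gives the
distance axioms. For lattices `N(A, B)` is finite: `(A + B)/(A ∩ B)` is a finitely generated
torsion `𝓞 K`-module (every vector has a multiple in `A ∩ B`, since `A` and `B` span `V`), so it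
is killed by some `c ≠ 0` and is a finitely generated module over the finite ring `𝓞 K/(c)`.
-/

theorem AddSubgroup.relIndex_le_relIndex_mul_relIndex {G : Type*} [AddGroup G]
    {H K L : AddSubgroup G} (hHK : H.relIndex K ≠ 0) (hKL : K.relIndex L ≠ 0) :
    H.relIndex L ≤ H.relIndex K * K.relIndex L := by
  have hHKL : H.relIndex (K ⊓ L) ≠ 0 := mt (relIndex_eq_zero_of_le_right inf_le_left) hHK
  calc H.relIndex L ≤ (H ⊓ K).relIndex L := relIndex_le_of_le_left inf_le_left
          (relIndex_inf_mul_relIndex H K L ▸ mul_ne_zero hHKL hKL)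
    _ = H.relIndex (K ⊓ L) * K.relIndex L := (relIndex_inf_mul_relIndex H K L).symm
    _ ≤ H.relIndex K * K.relIndex L :=
        Nat.mul_le_mul_right _ (relIndex_le_of_le_right inf_le_left hHK)

theorem Module.finite_of_isTorsion {R M : Type*} [CommRing R] [Nontrivial R]
    [Ring.HasFiniteQuotients R] [AddCommGroup M] [Module R M] [Module.Finite R M]
    (hM : Module.IsTorsion R M) : Finite M := by
  obtain ⟨a, ha, ha0⟩ := Submodule.annihilator_top_inter_nonZeroDivisors hM
  have hI : Module.annihilator R M ≠ ⊥ := by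
    rw [← Submodule.annihilator_top]
    exact Submodule.ne_bot_iff _ |>.mpr ⟨a, ha, nonZeroDivisors.coe_ne_zero ⟨a, ha0⟩⟩
  have := Ring.HasFiniteQuotients.finiteQuotient hI
  let := Module.quotientAnnihilator (R := R) (M := M)
  have : Module.Finite (R ⧸ Module.annihilator R M) M :=
    Module.Finite.of_restrictScalars_finite R _ _
  exact Module.finite_of_finite (R ⧸ Module.annihilator R M)

theorem Submodule.exists_smul_mem_of_mem_span {R K V : Type*} [CommRing R] [CommRing K]
    [Algebra R K] [IsFractionRing R K] [AddCommGroup V] [Module K V] [Module R V]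
    [IsScalarTower R K V] {B : Submodule R V} {x : V}
    (hx : x ∈ Submodule.span K (B : Set V)) : ∃ c : R⁰, c • x ∈ B := by
  obtain ⟨n, f, g, rfl⟩ := Submodule.mem_span_set'.mp hx
  obtain ⟨c, hc⟩ := IsLocalization.exist_integer_multiples R⁰ Finset.univ f
  refine ⟨c, ?_⟩
  rw [Finset.smul_sum]
  refine Submodule.sum_mem _ fun i _ => ?_
  obtain ⟨r, hr⟩ := hc i (Finset.mem_univ i)
  rw [← smul_assoc, Submonoid.smul_def, ← hr, algebraMap_smul]
  exact B.smul_mem r (g i).2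

section latticeQuot

variable {R V : Type*} [CommRing R] [AddCommGroup V] [Module R V]

theorem isTorsion_latticeQuot {A B : Submodule R V}
    (hA : ∀ x, ∃ c : R⁰, c • x ∈ A) (hB : ∀ x, ∃ c : R⁰, c • x ∈ B) :
    Module.IsTorsion R (latticeQuot A B) := by
  rintro ⟨⟨x, -⟩⟩
  obtain ⟨c, hc⟩ := hA x
  obtain ⟨d, hd⟩ := hB (c • x)
  refine ⟨d * c, (Submodule.Quotient.mk_eq_zero _).mpr ?_⟩
  change (d * c) • x ∈ A ⊓ B
  rw [mul_smul]
  exact ⟨A.smul_of_tower_mem d hc, hd⟩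

theorem card_latticeQuot (A B : Submodule R V) :
    Nat.card (latticeQuot A B) =
      B.toAddSubgroup.relIndex A.toAddSubgroup * A.toAddSubgroup.relIndex B.toAddSubgroup := by
  change (A.toAddSubgroup ⊓ B.toAddSubgroup).relIndex (A ⊔ B).toAddSubgroup = _
  rw [Submodule.sup_toAddSubgroup,
    ← AddSubgroup.relIndex_mul_relIndex _ _ _ inf_le_left le_sup_left, inf_comm,
    AddSubgroup.inf_relIndex_right, AddSubgroup.relIndex_sup_left]

theorem card_latticeQuot_comm (A B : Submodule R V) :
    Nat.card (latticeQuot A B) = Nat.card (latticeQuot B A) := by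
  rw [card_latticeQuot, card_latticeQuot, mul_comm]

theorem card_latticeQuot_eq_one_iff {A B : Submodule R V} :
    Nat.card (latticeQuot A B) = 1 ↔ A = B := by
  rw [card_latticeQuot, mul_eq_one, AddSubgroup.relIndex_eq_one, AddSubgroup.relIndex_eq_one,
    Submodule.toAddSubgroup_le, Submodule.toAddSubgroup_le, le_antisymm_iff, and_comm]

theorem card_latticeQuot_ne_zero_trans {A B C : Submodule R V}
    (hAB : Nat.card (latticeQuot A B) ≠ 0) (hBC : Nat.card (latticeQuot B C) ≠ 0) :
    Nat.card (latticeQuot A C) ≠ 0 := by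
  simp only [card_latticeQuot, mul_ne_zero_iff] at hAB hBC ⊢
  exact ⟨AddSubgroup.relIndex_ne_zero_trans hBC.1 hAB.1,
    AddSubgroup.relIndex_ne_zero_trans hAB.2 hBC.2⟩

theorem card_latticeQuot_le_mul {A B C : Submodule R V} (hAB : Nat.card (latticeQuot A B) ≠ 0)
    (hBC : Nat.card (latticeQuot B C) ≠ 0) :
    Nat.card (latticeQuot A C) ≤ Nat.card (latticeQuot A B) * Nat.card (latticeQuot B C) := by
  simp only [card_latticeQuot] at hAB hBC ⊢
  obtain ⟨hBA, hAB⟩ := mul_ne_zero_iff.mp hAB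
  obtain ⟨hCB, hBC⟩ := mul_ne_zero_iff.mp hBC
  grw [AddSubgroup.relIndex_le_relIndex_mul_relIndex hCB hBA,
    AddSubgroup.relIndex_le_relIndex_mul_relIndex hAB hBC]
  exact le_of_eq (by ring)

end latticeQuot

section latticeDelta

variable {K : Type*} [Field K] [NumberField K] {V : Type*} [AddCommGroup V] [Module K V]
  [Module (𝓞 K) V] [IsScalarTower (𝓞 K) K V] {A B C : Submodule (𝓞 K) V}

theorem finite_latticeQuot (hA : IsLattice K A) (hB : IsLattice K B) :
    Finite (latticeQuot A B) :=
  have : Module.Finite (𝓞 K) ↥(A ⊔ B) := Module.Finite.iff_fg.mpr (hA.1.sup hB.1)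
  Module.finite_of_isTorsion <| isTorsion_latticeQuot
    (fun _ => Submodule.exists_smul_mem_of_mem_span (hA.2 ▸ Submodule.mem_top))
    (fun _ => Submodule.exists_smul_mem_of_mem_span (hB.2 ▸ Submodule.mem_top))

theorem latticeDelta_nonneg : 0 ≤ latticeDelta K A B :=
  mul_nonneg (by positivity) (Real.log_natCast_nonneg _)

theorem latticeDelta_comm : latticeDelta K A B = latticeDelta K B A := by
  rw [latticeDelta, latticeDelta, card_latticeQuot_comm]

theorem latticeDelta_eq_zero_iff [Finite (latticeQuot A B)] :
    latticeDelta K A B = 0 ↔ A = B := by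
  have hd : (Module.finrank ℚ K : ℝ) ≠ 0 := Nat.cast_ne_zero.mpr Module.finrank_pos.ne'
  have hpos : (0 : ℝ) < Nat.card (latticeQuot A B) := Nat.cast_pos.mpr Nat.card_pos
  rw [latticeDelta, mul_eq_zero, one_div, inv_eq_zero, or_iff_right hd,
    ← card_latticeQuot_eq_one_iff]
  refine ⟨fun h => ?_, fun h => by simp [h]⟩
  exact_mod_cast Real.eq_one_of_pos_of_log_eq_zero hpos h

theorem latticeDelta_le_add [Finite (latticeQuot A B)] [Finite (latticeQuot B C)] :
    latticeDelta K A C ≤ latticeDelta K A B + latticeDelta K B C := by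
  have hAB : Nat.card (latticeQuot A B) ≠ 0 := Nat.card_pos.ne'
  have hBC : Nat.card (latticeQuot B C) ≠ 0 := Nat.card_pos.ne'
  have hAC : 0 < Nat.card (latticeQuot A C) :=
    Nat.pos_of_ne_zero (card_latticeQuot_ne_zero_trans hAB hBC)
  rw [latticeDelta, latticeDelta, latticeDelta, ← mul_add,
    ← Real.log_mul (by positivity) (by positivity)]
  gcongr
  exact_mod_cast card_latticeQuot_le_mul hAB hBC

end latticeDelta

theorem latticeDelta_is_distance_general (K : Type*) [Field K] [NumberField K]
    (V : Type*) [AddCommGroup V] [Module K V]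
    [Module (𝓞 K) V] [IsScalarTower (𝓞 K) K V]
    (V₁ V₂ V₃ : Submodule (𝓞 K) V)
    (h₁ : IsLattice K V₁) (h₂ : IsLattice K V₂) (h₃ : IsLattice K V₃) :
    0 ≤ latticeDelta K V₁ V₂
      ∧ (latticeDelta K V₁ V₂ = 0 ↔ V₁ = V₂)
      ∧ latticeDelta K V₁ V₂ = latticeDelta K V₂ V₁
      ∧ latticeDelta K V₁ V₃ ≤ latticeDelta K V₁ V₂ + latticeDelta K V₂ V₃ := by
  have := finite_latticeQuot h₁ h₂
  have := finite_latticeQuot h₂ h₃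
  exact ⟨latticeDelta_nonneg, latticeDelta_eq_zero_iff, latticeDelta_comm, latticeDelta_le_add⟩

/-- The function `δ` is a distance on the set `R(V)` of `𝓞 K`-lattices of `V`:
it is nonnegative, vanishes exactly on the diagonal, is symmetric and
satisfies the triangle inequality. -/
theorem latticeDelta_is_distance (K : Type*) [Field K] [NumberField K]
    (V : Type*) [AddCommGroup V] [Module K V] [FiniteDimensional K V]
    [Module (𝓞 K) V] [IsScalarTower (𝓞 K) K V]
    (V₁ V₂ V₃ : Submodule (𝓞 K) V)
    (h₁ : IsLattice K V₁) (h₂ : IsLattice K V₂) (h₃ : IsLattice K V₃) :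
    0 ≤ latticeDelta K V₁ V₂
      ∧ (latticeDelta K V₁ V₂ = 0 ↔ V₁ = V₂)
      ∧ latticeDelta K V₁ V₂ = latticeDelta K V₂ V₁
      ∧ latticeDelta K V₁ V₃ ≤ latticeDelta K V₁ V₂ + latticeDelta K V₂ V₃ :=
  latticeDelta_is_distance_general K V V₁ V₂ V₃ h₁ h₂ h₃
end
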